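/- arXiv:1708.06675 — 12 statements merged into one kernel-verified Lean document; each statement's English description precedes it below -/
import Mathlib

section
/- Let P be a finite poset and S a set of incomparable pairs of P. Then S is not reversible (i.e., there is no linear extension L of P with x > y in L for all (x,y) ∈ S) if and only if S contains an alternating cycle, i.e., pairs (x_1,y_1),...,(x_m,y_m) ∈ S with m ≥ 2 such that x_α ≤ y_{α-1} in P for all α (cyclically, so x_1 ≤ y_m). -/
namespace AltCycles

/-- A set `S` of pairs of a finite poset is reversible when some linear extension
(encoded as an injective strictly order-preserving map into `ℕ`) has `x > y` for
every `(x,y) ∈ S`. -/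
def Reversible {α : Type*} [PartialOrder α] (S : Set (α × α)) : Prop :=
  ∃ f : α → ℕ, Function.Injective f ∧ (∀ a b : α, a < b → f a < f b) ∧
    ∀ p ∈ S, f p.2 < f p.1

/-- `S` contains an alternating cycle: pairs `(x_α, y_α)`, `α ∈ ZMod m`, `m ≥ 2`,
all in `S`, with `x_α ≤ y_{α-1}` cyclically. -/
def HasAltCycle {α : Type*} [PartialOrder α] (S : Set (α × α)) : Prop :=
  ∃ m : ℕ, 2 ≤ m ∧ ∃ x y : ZMod m → α,
    (∀ i : ZMod m, (x i, y i) ∈ S) ∧ ∀ i : ZMod m, x i ≤ y (i - 1)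

section Aux

variable {α : Type*} [PartialOrder α]

/-- The combined relation: poset relation together with reversed `S`-edges. -/
private def rel (S : Set (α × α)) (a b : α) : Prop := a < b ∨ (b, a) ∈ S

/-- Structure of a path in the combined relation: either a pure poset relation,
or a sequence of `S`-pairs joined by poset relations. -/
private lemma walk_struct {S : Set (α × α)} {a b : α}
    (h : Relation.TransGen (rel S) a b) :
    a < b ∨ ∃ (n : ℕ) (x y : Fin (n + 1) → α),
      (∀ i, (x i, y i) ∈ S) ∧ a ≤ y 0 ∧
      (∀ i : Fin n, x i.castSucc ≤ y i.succ) ∧ x (Fin.last n) ≤ b := by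
  induction h with
  | @single b' h =>
    rcases h with h | h
    · exact Or.inl h
    · exact Or.inr ⟨0, fun _ => b', fun _ => a, fun _ => h, le_refl _,
        fun i => i.elim0, le_refl _⟩
  | @tail b' c _ h ih =>
    rcases h with h | h
    · rcases ih with h' | ⟨n, x, y, hSm, ha, hchain, hlast⟩
      · exact Or.inl (h'.trans h)
      · exact Or.inr ⟨n, x, y, hSm, ha, hchain, hlast.trans h.le⟩
    · rcases ih with h' | ⟨n, x, y, hSm, ha, hchain, hlast⟩
      · exact Or.inr ⟨0, fun _ => c, fun _ => b', fun _ => h, h'.le,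
          fun i => i.elim0, le_refl _⟩
      · refine Or.inr ⟨n + 1, Fin.snoc x c, Fin.snoc y b', ?_, ?_, ?_, ?_⟩
        · intro i
          refine Fin.lastCases ?_ ?_ i
          · simpa [Fin.snoc_last] using h
          · intro j
            simpa [Fin.snoc_castSucc] using hSm j
        · have h0 : (0 : Fin (n + 2)) = (0 : Fin (n + 1)).castSucc := by
            simp
          rw [h0, Fin.snoc_castSucc]
          exact ha
        · intro i
          refine Fin.lastCases ?_ ?_ i
          · rw [Fin.snoc_castSucc, Fin.succ_last, Fin.snoc_last]
            exact hlast
          · intro j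
            rw [Fin.snoc_castSucc, Fin.succ_castSucc, Fin.snoc_castSucc]
            exact hchain j
        · rw [Fin.snoc_last]

omit [PartialOrder α] in
/-- An irreflexive relation (in the transitive-closure sense) on a finite type
admits a strictly increasing embedding into `ℕ`. -/
private lemma exists_nat_embedding [Fintype α] (r : α → α → Prop)
    (hirr : ∀ a, ¬ Relation.TransGen r a a) :
    ∃ f : α → ℕ, Function.Injective f ∧
      ∀ a b, Relation.TransGen r a b → f a < f b := by
  classical
  let le' : α → α → Prop := fun a b => Relation.TransGen r a b ∨ a = b
  haveI : IsPartialOrder α le' :=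
    { refl := fun a => Or.inr rfl
      trans := by
        rintro a b c (h1 | rfl) (h2 | rfl)
        · exact Or.inl (h1.trans h2)
        · exact Or.inl h1
        · exact Or.inl h2
        · exact Or.inr rfl
      antisymm := by
        rintro a b (h1 | rfl) (h2 | h)
        · exact absurd (h1.trans h2) (hirr a)
        · exact h.symm
        · rfl
        · rfl }
  obtain ⟨s, hs, hles⟩ := extend_partialOrder le'
  have strans : ∀ {a b c : α}, s a b → s b c → s a c := fun h1 h2 =>
    hs.1.1.2.1 _ _ _ h1 h2
  have santi : ∀ {a b : α}, s a b → s b a → a = b := fun h1 h2 =>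
    hs.1.2.1 _ _ h1 h2
  have stotal : ∀ a b : α, s a b ∨ s b a := fun a b => hs.2.1 a b
  let f : α → ℕ := fun a => (Finset.univ.filter fun c => s c a ∧ c ≠ a).card
  have hstrict : ∀ a b : α, s a b → a ≠ b → f a < f b := by
    intro a b hab hne
    apply Finset.card_lt_card
    constructor
    · intro c hc
      simp only [Finset.mem_filter, Finset.mem_univ, true_and] at hc ⊢
      refine ⟨strans hc.1 hab, ?_⟩
      rintro rfl
      exact hne (santi hab hc.1)
    · intro hsub
      have : a ∈ Finset.univ.filter fun c => s c b ∧ c ≠ b := by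
        simp only [Finset.mem_filter, Finset.mem_univ, true_and]
        exact ⟨hab, hne⟩
      have := hsub this
      simp at this
  have key : ∀ a b, Relation.TransGen r a b → f a < f b := by
    intro a b h
    have hne : a ≠ b := by
      rintro rfl
      exact hirr a h
    have : s a b := hles a b (Or.inl h)
    exact hstrict a b this hne
  refine ⟨f, ?_, key⟩
  intro a b hfab
  by_contra hne
  rcases stotal a b with h | h
  · exact absurd hfab (hstrict a b h hne).ne
  · exact absurd hfab.symm (hstrict b a h (Ne.symm hne)).ne

end Aux

/-- a set of incomparable pairs of a finite poset is not reversible iff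
it contains an alternating cycle. -/
theorem not_reversible_iff_hasAltCycle {α : Type*} [Fintype α] [PartialOrder α]
    (S : Set (α × α)) (hS : ∀ p ∈ S, ¬ p.1 ≤ p.2 ∧ ¬ p.2 ≤ p.1) :
    ¬ Reversible S ↔ HasAltCycle S := by
  constructor
  · intro hnr
    by_contra hnc
    apply hnr
    have hirr : ∀ a, ¬ Relation.TransGen (rel S) a a := by
      intro a ha
      rcases walk_struct ha with h | ⟨n, x, y, hSm, ha0, hchain, hlast⟩
      · exact absurd h (lt_irrefl a)
      · cases n with
        | zero =>
          have h0 : x 0 ≤ a := by simpa using hlast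
          exact (hS _ (hSm 0)).1 (h0.trans ha0)
        | succ k =>
          apply hnc
          haveI : NeZero (k + 2) := ⟨by omega⟩
          haveI : Fact (1 < k + 2) := ⟨by omega⟩
          refine ⟨k + 2, Nat.le_add_left 2 k,
            fun i => x ⟨(-i).val, ZMod.val_lt _⟩,
            fun i => y ⟨(-i).val, ZMod.val_lt _⟩,
            fun i => hSm _, ?_⟩
          intro i
          show x ⟨(-i).val, ZMod.val_lt _⟩ ≤ y ⟨(-(i - 1)).val, ZMod.val_lt _⟩
          have hneg : -(i - 1) = -i + 1 := by ring
          rw [hneg]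
          have hv : ((-i) + 1).val = ((-i).val + 1) % (k + 2) := by
            rw [ZMod.val_add, ZMod.val_one]
          have hjlt : (-i).val < k + 2 := ZMod.val_lt _
          rcases Nat.lt_or_ge (-i).val (k + 1) with hlt | hge
          · have : ((-i).val + 1) % (k + 2) = (-i).val + 1 :=
              Nat.mod_eq_of_lt (by omega)
            have hc := hchain ⟨(-i).val, hlt⟩
            simp only [Fin.castSucc_mk, Fin.succ_mk] at hc
            have heq : (⟨(-i + 1).val, ZMod.val_lt _⟩ : Fin (k + 2))
                = ⟨(-i).val + 1, by omega⟩ := Fin.ext (by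
                  show (-i + 1).val = (-i).val + 1
                  rw [hv, this])
            rw [heq]
            exact hc
          · have hj : (-i).val = k + 1 := by omega
            have : ((-i).val + 1) % (k + 2) = 0 := by
              rw [hj]; simp
            have hc : x ⟨(-i).val, hjlt⟩ ≤ y 0 := by
              have : (⟨(-i).val, hjlt⟩ : Fin (k + 2)) = Fin.last (k + 1) := by
                simp [Fin.ext_iff, hj]
              rw [this]
              exact hlast.trans ha0
            have heq : (⟨(-i + 1).val, ZMod.val_lt _⟩ : Fin (k + 2)) = 0 :=
              Fin.ext (by
                show (-i + 1).val = (0 : Fin (k + 2)).val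
                rw [hv, ‹((-i).val + 1) % (k + 2) = 0›]
                rfl)
            rw [heq]
            exact hc
    obtain ⟨f, hinj, hmono⟩ := exists_nat_embedding (rel S) hirr
    exact ⟨f, hinj,
      fun a b h => hmono a b (Relation.TransGen.single (Or.inl h)),
      fun p hp => hmono p.2 p.1 (Relation.TransGen.single (Or.inr hp))⟩
  · rintro ⟨m, hm, x, y, hxyS, hcyc⟩ ⟨f, hinj, hmono, hrev⟩
    have hle : ∀ a b : α, a ≤ b → f a ≤ f b := by
      intro a b h
      rcases h.lt_or_eq with h | rfl
      · exact (hmono _ _ h).le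
      · exact le_rfl
    have key : ∀ i : ZMod m, f (x i) < f (x (i - 1)) := fun i =>
      lt_of_le_of_lt (hle _ _ (hcyc i)) (hrev _ (hxyS (i - 1)))
    have claim : ∀ n : ℕ, f (x 0) < f (x (-((n : ℕ) + 1 : ℕ) : ZMod m)) := by
      intro n
      induction n with
      | zero =>
        have := key 0
        have h0 : ((0 : ZMod m) - 1) = (-((0 : ℕ) + 1 : ℕ) : ZMod m) := by
          push_cast; ring
        rwa [h0] at this
      | succ k ih =>
        refine ih.trans ?_
        have := key (-((k : ℕ) + 1 : ℕ) : ZMod m)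
        have h1 : ((-((k : ℕ) + 1 : ℕ) : ZMod m) - 1)
            = (-((k + 1 : ℕ) + 1 : ℕ) : ZMod m) := by
          push_cast; ring
        rwa [h1] at this
    obtain ⟨m', rfl⟩ : ∃ m', m = m' + 1 := ⟨m - 1, by omega⟩
    have := claim m'
    have h0 : (-((m' : ℕ) + 1 : ℕ) : ZMod (m' + 1)) = 0 := by
      simp [ZMod.natCast_self]
    rw [h0] at this
    exact lt_irrefl _ this

end AltCycles
end

section
/- Let P be a finite poset and S a set of incomparable pairs of P containing an alternating cycle. Then S contains a strict alternating cycle: pairs (x_1,y_1),...,(x_m,y_m) ∈ S with m ≥ 2 such that x_α ≤ y_β in P if and only if β = α - 1 (cyclically). -/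
namespace AltCycles

/-- `S` contains a strict alternating cycle: additionally `x_α ≤ y_β` only for `β = α-1`. -/
def HasStrictAltCycle {α : Type*} [PartialOrder α] (S : Set (α × α)) : Prop :=
  ∃ m : ℕ, 2 ≤ m ∧ ∃ x y : ZMod m → α,
    (∀ i : ZMod m, (x i, y i) ∈ S) ∧ ∀ i j : ZMod m, (x i ≤ y j ↔ j = i - 1)

/-- if a set of incomparable pairs of a finite poset contains an
alternating cycle, then it contains a strict alternating cycle. -/
theorem hasStrictAltCycle_of_hasAltCycle {α : Type*} [Fintype α] [PartialOrder α]
    (S : Set (α × α)) (hS : ∀ p ∈ S, ¬ p.1 ≤ p.2 ∧ ¬ p.2 ≤ p.1)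
    (h : HasAltCycle S) : HasStrictAltCycle S := by
  classical
  suffices key : ∀ m : ℕ, 2 ≤ m → (∃ x y : ZMod m → α,
      (∀ i : ZMod m, (x i, y i) ∈ S) ∧ ∀ i : ZMod m, x i ≤ y (i - 1)) →
      HasStrictAltCycle S by
    obtain ⟨m, hm2, hx⟩ := h
    exact key m hm2 hx
  intro m
  induction m using Nat.strong_induction_on with
  | _ m ih =>
  intro hm2 ⟨x, y, hxyS, hcyc⟩
  haveI : NeZero m := ⟨by omega⟩
  by_cases hstrict : ∀ i j : ZMod m, x i ≤ y j → j = i - 1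
  · exact ⟨m, hm2, x, y, hxyS, fun i j =>
      ⟨hstrict i j, by rintro rfl; exact hcyc i⟩⟩
  push_neg at hstrict
  obtain ⟨i, j, hle, hne⟩ := hstrict
  -- j ≠ i, else x i ≤ y i contradicts incomparability
  have hji : j ≠ i := by
    rintro rfl
    exact (hS _ (hxyS j)).1 hle
  set d : ℕ := (j - i).val with hd
  have hdm : d < m := ZMod.val_lt _
  have hd0 : d ≠ 0 := by
    intro h0
    exact hji (sub_eq_zero.mp ((ZMod.val_eq_zero (j - i)).mp h0))
  have hdm1 : d ≠ m - 1 := by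
    intro hd1
    apply hne
    have h1 : j - i = ((m - 1 : ℕ) : ZMod m) := by
      have : (((m - 1 : ℕ)) : ZMod m).val = m - 1 := ZMod.val_natCast_of_lt (by omega)
      apply ZMod.val_injective
      rw [this, ← hd, hd1]
    have h2 : ((m - 1 : ℕ) : ZMod m) = -1 := by
      rw [Nat.cast_sub (by omega : 1 ≤ m), Nat.cast_one, ZMod.natCast_self, zero_sub]
    rw [h2] at h1
    linear_combination h1
  set m' : ℕ := d + 1 with hm'
  have hm'2 : 2 ≤ m' := by omega
  have hm'm : m' < m := by omega
  haveI : NeZero m' := ⟨by omega⟩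
  apply ih m' hm'm hm'2
  refine ⟨fun k => x (i + (k.val : ZMod m)), fun k => y (i + (k.val : ZMod m)),
    fun k => hxyS _, ?_⟩
  intro k
  by_cases hk : k = 0
  · subst hk
    have h1 : ((0 : ZMod m').val : ZMod m) = 0 := by
      rw [ZMod.val_zero, Nat.cast_zero]
    have h2 : (((0 : ZMod m') - 1).val : ZMod m) = j - i := by
      rw [zero_sub]
      have : (-1 : ZMod m').val = d := ZMod.val_neg_one d
      rw [this, hd, ZMod.natCast_zmod_val]
    simp only [h1, h2, add_zero]
    have : i + (j - i) = j := by ring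
    rw [this]
    exact hle
  · have hkv : 1 ≤ k.val := by
      rcases Nat.eq_zero_or_pos k.val with h0 | h0
      · exact absurd ((ZMod.val_eq_zero k).mp h0) hk
      · exact h0
    have hklt : k.val < m' := ZMod.val_lt k
    have hk1 : (k - 1 : ZMod m') = ((k.val - 1 : ℕ) : ZMod m') := by
      rw [Nat.cast_sub hkv, Nat.cast_one, ZMod.natCast_zmod_val]
    have hk1v : (k - 1 : ZMod m').val = k.val - 1 := by
      rw [hk1, ZMod.val_natCast_of_lt (by omega)]
    have key := hcyc (i + (k.val : ZMod m))
    have harith : i + ((k.val : ℕ) : ZMod m) - 1 = i + (((k.val - 1 : ℕ)) : ZMod m) := by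
      rw [Nat.cast_sub hkv, Nat.cast_one]
      ring
    rw [harith] at key
    simpa only [hk1v] using key

end AltCycles
end

section
/- Let n ≥ 3, k ≥ 0, and suppose the crown S_n^k contains a strict alternating cycle of size m (with m ≥ 2) among its incomparable pairs (a_i, b_j). Then m·n ≤ 2(n+k). -/
namespace CrownPaper

/-- Indices of the crown `S_n^k` live in `ZMod (n+k)`. The minimal element `a_i` is
incomparable to the maximal element `b_j` iff `(j - i) mod (n+k) ≤ k`. -/
def Incomp (n k : ℕ) (i j : ZMod (n + k)) : Prop := (j - i).val ≤ k

/-- `a_i < b_j` in the crown `S_n^k` iff `(j - i) mod (n+k) > k`. -/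
def CompLt (n k : ℕ) (i j : ZMod (n + k)) : Prop := k < (j - i).val

/-- A pair `(a_i, b_j)` is recorded as its pair of indices. -/
abbrev Pair (n k : ℕ) := ZMod (n + k) × ZMod (n + k)

/-- `(a_i, b_j)` is an incomparable (critical) pair. -/
def IsIncPair (n k : ℕ) (p : Pair n k) : Prop := Incomp n k p.1 p.2

/-- Adjacency in the graph `G_n^k` of critical pairs: `(a_i,b_j)` and `(a_p,b_q)` are
adjacent iff `a_i < b_q` and `a_p < b_j` in `S_n^k`. -/
def Adj (n k : ℕ) (p q : Pair n k) : Prop :=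
  CompLt n k p.1 q.2 ∧ CompLt n k q.1 p.2

/-- An independent set of critical pairs in `G_n^k`. -/
def Indep (n k : ℕ) (S : Set (Pair n k)) : Prop :=
  (∀ p ∈ S, IsIncPair n k p) ∧ ∀ p ∈ S, ∀ q ∈ S, ¬ Adj n k p q

/-- A set of pairs is reversible when some linear extension of the crown (encoded as an
injective map into `ℕ` on the disjoint union `A ⊕ B` preserving all strict comparabilities
`a_i < b_j`) puts `a` above `b` for every pair `(a,b)` of the set. -/
def Reversible (n k : ℕ) (S : Set (Pair n k)) : Prop :=
  ∃ f : (ZMod (n + k)) ⊕ (ZMod (n + k)) → ℕ,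
    Function.Injective f ∧
    (∀ i j : ZMod (n + k), CompLt n k i j → f (Sum.inl i) < f (Sum.inr j)) ∧
    ∀ p ∈ S, f (Sum.inr p.2) < f (Sum.inl p.1)

/-!
Read the indices in `ZMod (n + k)`. Then `a_i < b_j` exactly when `i` is one of the `n - 1`
positions following `j`, so in a strict alternating cycle the point `x (β + 1)` follows `y β`
within `n` steps, and follows no other `y γ` within `n` steps. Consequently no block of `n`
consecutive positions contains three of the `y`'s: if `y α` is the first of them and `y β` comes
before `y γ`, then `x (β + 1)` would follow `y α` or `y γ` within `n` steps. Every `y α` lies in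
exactly `n` such blocks, and double counting gives `m * n ≤ 2 * (n + k)`.
-/

open Finset

section Window

variable {N : ℕ} [NeZero N]

lemma val_sub_of_lt {a b : ZMod N} (h : a.val < b.val) : (a - b).val = N + a.val - b.val := by
  have hba : b - a ≠ 0 := sub_ne_zero.2 fun hab => h.ne (congrArg ZMod.val hab.symm)
  rw [← neg_sub, ZMod.neg_val, if_neg hba, ZMod.val_sub h.le]
  have := b.val_lt
  omega

lemma val_mem_Ioo_or_val_sub_mem_Ioo {n : ℕ} {b c z : ZMod N} (hbc : b.val < c.val)
    (hc : c.val < n) (hz : (z - b).val ∈ Set.Ioo 0 n) :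
    z.val ∈ Set.Ioo 0 n ∨ (z - c).val ∈ Set.Ioo 0 n := by
  have := z.val_lt
  have := c.val_lt
  simp only [Set.mem_Ioo] at hz ⊢
  rcases le_or_gt b.val z.val with hb | hb
  · rw [ZMod.val_sub hb] at hz
    rcases le_or_gt c.val z.val with hcz | hcz
    · rw [ZMod.val_sub hcz]; omega
    · rw [val_sub_of_lt hcz]; omega
  · rw [val_sub_of_lt hb] at hz
    rw [val_sub_of_lt (hb.trans hbc)]
    omega

lemma le_card_filter_val_sub_lt {n : ℕ} (hn : n ≤ N) (a : ZMod N) :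
    n ≤ #{q : ZMod N | (q - a).val < n} := by
  have hval : ∀ i ∈ range n, (i : ZMod N).val = i := fun i hi =>
    ZMod.val_cast_of_lt ((mem_range.1 hi).trans_le hn)
  calc n = #(range n) := (card_range n).symm
    _ ≤ _ := card_le_card_of_injOn (fun i => a + i)
        (fun i hi => by simpa [hval i hi] using mem_range.1 hi)
        (fun i hi j hj hij => by
          rw [← hval i hi, ← hval j hj, add_left_cancel (hij : a + i = a + j)])

end Window

section Witness

-- `w β` stands for `x (β + 1)`.
variable {ι : Type*} {N n : ℕ} {y w : ι → ZMod N}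
  (hw : ∀ β γ, (w β - y γ).val ∈ Set.Ioo 0 n ↔ γ = β)
include hw

lemma injective_of_witness : Function.Injective y := fun β γ hβγ =>
  (hw γ β).1 (hβγ ▸ (hw γ γ).2 rfl)

lemma card_filter_val_sub_mem_Ioo_le_one [NeZero N] [Fintype ι] (α : ι) :
    #{β | (y β - y α).val ∈ Set.Ioo 0 n} ≤ 1 := by
  have hval_ne : ∀ β γ, β ≠ γ → (y β - y α).val ≠ (y γ - y α).val := fun β γ hβγ h =>
    hβγ (injective_of_witness hw (sub_left_inj.1 (ZMod.val_injective N h)))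
  have hmiddle : ∀ β γ, (y β - y α).val ∈ Set.Ioo 0 n → (y γ - y α).val < n →
      (y β - y α).val < (y γ - y α).val → False := by
    intro β γ hβ hγ hβγ
    have hαβ : α ≠ β := by rintro rfl; simp at hβ
    have hz : (w β - y α - (y β - y α)).val ∈ Set.Ioo 0 n := by
      rw [sub_sub_sub_cancel_right]; exact (hw β β).2 rfl
    rcases val_mem_Ioo_or_val_sub_mem_Ioo hβγ hγ hz with h | h
    · exact hαβ ((hw β α).1 h)
    · rw [sub_sub_sub_cancel_right] at h
      obtain rfl := (hw β γ).1 h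
      exact lt_irrefl _ hβγ
  refine card_le_one.2 fun β hβ γ hγ => by_contra fun hβγ => ?_
  simp only [mem_filter, mem_univ, true_and] at hβ hγ
  rcases lt_or_gt_of_ne (hval_ne β γ hβγ) with h | h
  · exact hmiddle β γ hβ hγ.2 h
  · exact hmiddle γ β hγ hβ.2 h

lemma card_filter_val_sub_lt_le_two [NeZero N] [Fintype ι] (q : ZMod N) :
    #{α | (q - y α).val < n} ≤ 2 := by
  classical
  set S : Finset ι := {α | (q - y α).val < n}
  obtain hS | hS := S.eq_empty_or_nonempty
  · simp [hS]
  obtain ⟨α, hα, hfirst⟩ := S.exists_max_image (fun α => (q - y α).val) hS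
  have hafter : S.erase α ⊆ ({β | (y β - y α).val ∈ Set.Ioo 0 n} : Finset ι) := by
    intro β hβ
    obtain ⟨hβα, hβS⟩ := mem_erase.1 hβ
    have hne : (q - y β).val ≠ (q - y α).val := fun h =>
      hβα (injective_of_witness hw (sub_right_inj.1 (ZMod.val_injective N h)))
    have hle := hfirst β hβS
    have hαS := (mem_filter.1 hα).2
    simp only [mem_filter, mem_univ, true_and, Set.mem_Ioo]
    rw [← sub_sub_sub_cancel_left (y α) (y β) q, ZMod.val_sub hle]
    omega
  calc #S = #(S.erase α) + 1 := (card_erase_add_one hα).symm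
    _ ≤ 1 + 1 := by
      gcongr
      exact (card_le_card hafter).trans (card_filter_val_sub_mem_Ioo_le_one hw α)

theorem card_mul_le_two_mul_of_witness [NeZero N] [Fintype ι] (hn : n ≤ N) :
    Fintype.card ι * n ≤ 2 * N := by
  have := card_mul_le_card_mul (s := univ) (t := univ) (fun α q => (q - y α).val < n)
    (fun α _ => le_card_filter_val_sub_lt hn (y α))
    (fun q _ => card_filter_val_sub_lt_le_two hw q)
  simpa [mul_comm] using this

end Witness

lemma compLt_iff {n k : ℕ} [NeZero (n + k)] {i j : ZMod (n + k)} :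
    CompLt n k i j ↔ (i - j).val ∈ Set.Ioo 0 n := by
  rw [CompLt, Set.mem_Ioo, ← neg_sub i j, ZMod.neg_val]
  by_cases h : i - j = 0
  · simp [h]
  · have := (i - j).val_lt
    have := ZMod.val_pos.2 h
    rw [if_neg h]
    omega

theorem strictAltCycle_size_bound_general (n k m : ℕ)
    (x y : ZMod m → ZMod (n + k))
    (hstrict : ∀ α β : ZMod m, (CompLt n k (x α) (y β) ↔ β = α - 1)) :
    m * n ≤ 2 * (n + k) := by
  rcases Nat.eq_zero_or_pos n with rfl | hn
  · simp
  rcases Nat.eq_zero_or_pos m with rfl | hm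
  · simp
  have : NeZero (n + k) := ⟨by omega⟩
  have : NeZero m := ⟨hm.ne'⟩
  have hw : ∀ β γ, (x (β + 1) - y γ).val ∈ Set.Ioo 0 n ↔ γ = β := fun β γ => by
    rw [← compLt_iff, hstrict, add_sub_cancel_right]
  simpa [ZMod.card] using card_mul_le_two_mul_of_witness hw (Nat.le_add_right n k)

/-- if the crown `S_n^k` contains a strict alternating cycle of size `m ≥ 2`
among its incomparable pairs, then `m·n ≤ 2(n+k)`. -/
theorem strictAltCycle_size_bound (n k m : ℕ) (hn : 3 ≤ n) (hm : 2 ≤ m)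
    (x y : ZMod m → ZMod (n + k))
    (hinc : ∀ α : ZMod m, Incomp n k (x α) (y α))
    (hstrict : ∀ α β : ZMod m, (CompLt n k (x α) (y β) ↔ β = α - 1)) :
    m * n ≤ 2 * (n + k) :=
  strictAltCycle_size_bound_general n k m x y hstrict

end CrownPaper
end

section
/- For integers n ≥ 3 and k ≥ 0, the crown S_n^k contains a strict alternating cycle of size 3 among its incomparable pairs if and only if n ≤ 2k. Consequently, there exists an independent non-reversible set of critical pairs in G_n^k iff n ≤ 2k. -/
section PeriodicWalk

variable {α : Type*}

/-- Closed `r`-walks of length `t`, encoded as `t`-periodic infinite walks. -/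
def HasPeriodicWalk (r : α → α → Prop) (t : ℕ) : Prop :=
  ∃ p : ℕ → α, (∀ i, r (p i) (p (i + 1))) ∧ Function.Periodic p t

variable {r : α → α → Prop}

theorem hasPeriodicWalk_of_rel_of_le {p : ℕ → α} (hp : ∀ i, r (p i) (p (i + 1))) {a b : ℕ}
    (hab : a ≤ b) (hba : r (p b) (p a)) : HasPeriodicWalk r (b - a + 1) := by
  refine ⟨fun i => p (a + i % (b - a + 1)), fun i => ?_, fun i => by simp⟩
  dsimp only
  rw [← Nat.mod_add_mod]
  have := Nat.mod_lt i (by omega : 0 < b - a + 1)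
  obtain hlt | hlast : i % (b - a + 1) < b - a ∨ i % (b - a + 1) = b - a := by omega
  · rw [Nat.mod_eq_of_lt (by omega : i % (b - a + 1) + 1 < b - a + 1)]
    exact hp _
  · rw [hlast, Nat.mod_self, Nat.add_zero, Nat.add_sub_cancel' hab]
    exact hba

theorem exists_hasPeriodicWalk_of_walk [Finite α] {p : ℕ → α} (hp : ∀ i, r (p i) (p (i + 1))) :
    ∃ t, 0 < t ∧ HasPeriodicWalk r t := by
  obtain ⟨i, j, hne, hij⟩ := Finite.exists_ne_map_eq_of_infinite p
  wlog hlt : i < j generalizing i j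
  · exact this j i hne.symm hij.symm (by omega)
  refine ⟨j - 1 - i + 1, by omega, hasPeriodicWalk_of_rel_of_le hp (by omega) ?_⟩
  have := hp (j - 1)
  rwa [Nat.sub_add_cancel (by omega), ← hij] at this

/-- The first four vertices of a shortest cycle. -/
theorem exists_chordless_path (hr : ∀ a b, r a b → ¬ r b a)
    (h : ∃ t, 0 < t ∧ HasPeriodicWalk r t) :
    ∃ a b c d, r a b ∧ r b c ∧ r c d ∧ ¬ r a c ∧ ¬ r b d ∧ ¬ r a d := by
  classical
  obtain ⟨ht, p, hp, hper⟩ := Nat.find_spec h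
  set t := Nat.find h
  have hmin : ∀ a b, a ≤ b → r (p b) (p a) → t ≤ b - a + 1 := fun a b hab hba =>
    Nat.find_min' h ⟨by omega, hasPeriodicWalk_of_rel_of_le hp hab hba⟩
  have hp0 : p t = p 0 := by simpa using hper 0
  have hp1 : p (t + 1) = p 1 := by simpa [add_comm] using hper 1
  have ht3 : 3 ≤ t := by
    by_contra! ht3
    interval_cases t
    · exact hr _ _ (hp 0) (by simpa [hp0] using hp 0)
    · exact hr _ _ (hp 0) (by simpa [hp0] using hp 1)
  refine ⟨p 0, p 1, p 2, p 3, hp 0, hp 1, hp 2, fun h02 => ?_, fun h13 => ?_, fun h03 => ?_⟩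
  · have := hmin 2 t (by omega) (hp0 ▸ h02); omega
  · have := hmin 3 (t + 1) (by omega) (hp1 ▸ h13); omega
  · have := hmin 3 t ht3 (hp0 ▸ h03); omega

theorem not_transGen_self_of_forall_not_hasPeriodicWalk [Finite α]
    (h : ∀ t, 0 < t → ¬ HasPeriodicWalk r t) (a : α) : ¬ Relation.TransGen r a a := by
  have hwf : WellFounded (flip r) := wellFounded_iff_isEmpty_descending_chain.2
    ⟨fun ⟨_, hp⟩ => by
      obtain ⟨t, ht, hwalk⟩ := exists_hasPeriodicWalk_of_walk hp
      exact h t ht hwalk⟩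
  rw [← Relation.transGen_swap]
  exact hwf.transGen.irrefl.irrefl a

theorem exists_injective_nat_of_forall_not_hasPeriodicWalk [Finite α]
    (h : ∀ t, 0 < t → ¬ HasPeriodicWalk r t) :
    ∃ f : α → ℕ, Function.Injective f ∧ ∀ a b, r a b → f a < f b := by
  have hacyc := not_transGen_self_of_forall_not_hasPeriodicWalk h
  let _ : PartialOrder α :=
    { le := Relation.ReflTransGen r
      le_refl := fun _ => .refl
      le_trans := fun _ _ _ => .trans
      le_antisymm := fun a b hab hba => by
        rcases Relation.reflTransGen_iff_eq_or_transGen.mp hab with h | h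
        · exact h.symm
        · exact (hacyc a (h.trans_left hba)).elim }
  have : Finite (LinearExtension α) := ‹Finite α›
  obtain ⟨e⟩ := nonempty_orderEmbedding_of_finite_infinite (LinearExtension α) ℕ
  refine ⟨fun a => e (toLinearExtension a), e.injective.comp fun _ _ => id, fun a b hab => ?_⟩
  have hle : a ≤ b := Relation.ReflTransGen.single hab
  refine e.strictMono ((toLinearExtension.monotone hle).lt_of_ne fun heq => ?_)
  have hab' : a = b := heq
  exact hacyc a (.single (hab' ▸ hab))

end PeriodicWalk

theorem ZMod.val_natCast_sub_natCast {m a b : ℕ} [NeZero m] (ha : a < m) (hb : b < m) :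
    ((b : ZMod m) - a).val = if a ≤ b then b - a else b + m - a := by
  split_ifs with hab
  · rw [← Nat.cast_sub hab, ZMod.val_cast_of_lt (by omega)]
  · rw [show ((b : ZMod m) - a) = ((b + m - a : ℕ) : ZMod m) by
      rw [Nat.cast_sub (by omega), Nat.cast_add, ZMod.natCast_self, add_zero]]
    exact ZMod.val_cast_of_lt (by omega)

theorem le_three_mul_of_forall_val_sub {m k : ℕ} [NeZero m] {x y : ZMod 3 → ZMod m}
    (h : ∀ α, (y α - x α).val ≤ k ∧ (y (α + 1) - x α).val ≤ k ∧ k < (y α - x (α + 1)).val) :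
    m ≤ 3 * k := by
  by_contra! hm
  set e : ZMod 3 → ℕ := fun α => (y α - x α).val
  set g : ZMod 3 → ℕ := fun α => (y (α + 1) - x α).val
  have he_cast : ∀ α, ((e α : ℕ) : ZMod m) = y α - x α := fun α => ZMod.natCast_zmod_val _
  have hg_cast : ∀ α, ((g α : ℕ) : ZMod m) = y (α + 1) - x α := fun α => ZMod.natCast_zmod_val _
  have he : ∀ α, e α ≤ k := fun α => (h α).1
  have hg : ∀ α, g α ≤ k := fun α => (h α).2.1
  have he₀ := he 0; have he₁ := he 1; have he₂ := he 2
  have hg₀ := hg 0; have hg₁ := hg 1; have hg₂ := hg 2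
  -- the three steps `x α → x (α + 1)` are `e - g` modulo `m`, and they add up to zero
  have hsum : (e 0 : ℤ) - g 0 + (e 1 - g 1) + (e 2 - g 2) = 0 := by
    refine Int.eq_zero_of_abs_lt_dvd ((ZMod.intCast_zmod_eq_zero_iff_dvd _ m).mp ?_) ?_
    · push_cast
      rw [he_cast, he_cast, he_cast, hg_cast, hg_cast, hg_cast,
        show (0 : ZMod 3) + 1 = 1 from rfl, show (1 : ZMod 3) + 1 = 2 from rfl,
        show (2 : ZMod 3) + 1 = 0 from rfl]
      ring
    · rw [abs_lt]; constructor <;> omega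
  have hout : ∀ α, (e α : ℤ) - g α + e (α + 1) < 0 ∨ k < (e α : ℤ) - g α + e (α + 1) := by
    intro α
    by_contra! hc
    have hval : y α - x (α + 1) = (((e α : ℤ) - g α + e (α + 1) : ℤ) : ZMod m) := by
      push_cast; rw [he_cast, he_cast, hg_cast]; ring
    have := (h α).2.2
    rw [hval, ← Int.ofNat_lt, ZMod.val_intCast, Int.emod_eq_of_lt hc.1 (by omega)] at this
    omega
  have h₀ : (e 0 : ℤ) - g 0 + e 1 < 0 ∨ k < (e 0 : ℤ) - g 0 + e 1 := hout 0
  have h₁ : (e 1 : ℤ) - g 1 + e 2 < 0 ∨ k < (e 1 : ℤ) - g 1 + e 2 := hout 1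
  have h₂ : (e 2 : ℤ) - g 2 + e 0 < 0 ∨ k < (e 2 : ℤ) - g 2 + e 0 := hout 2
  omega

namespace CrownPaper

section

variable {n k : ℕ}

theorem incomp_iff_not_compLt {i j : ZMod (n + k)} : Incomp n k i j ↔ ¬ CompLt n k i j :=
  not_lt.symm

def IsStrictAltCycle (n k : ℕ) (x y : ZMod 3 → ZMod (n + k)) : Prop :=
  (∀ α, Incomp n k (x α) (y α)) ∧ ∀ α β, (CompLt n k (x α) (y β) ↔ β = α - 1)

theorem isStrictAltCycle_iff {x y : ZMod 3 → ZMod (n + k)} :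
    IsStrictAltCycle n k x y ↔ ∀ α, Incomp n k (x α) (y α) ∧ Incomp n k (x α) (y (α + 1)) ∧
      CompLt n k (x (α + 1)) (y α) := by
  constructor
  · refine fun h α => ⟨h.1 α, incomp_iff_not_compLt.2 fun hc => ?_, (h.2 _ _).2 (by ring)⟩
    revert hc; rw [h.2]; revert α; decide
  · refine fun h => ⟨fun α => (h α).1, fun α β => ?_⟩
    obtain rfl | rfl | rfl : α = β ∨ β = α + 1 ∨ β = α - 1 := by revert α β; decide
    · exact iff_of_false (incomp_iff_not_compLt.1 (h α).1) (by revert α; decide)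
    · exact iff_of_false (incomp_iff_not_compLt.1 (h α).2.1) (by revert α; decide)
    · exact iff_of_true (by simpa using (h (α - 1)).2.2) rfl

theorem isStrictAltCycle_vecCons {x₀ x₁ x₂ y₀ y₁ y₂ : ZMod (n + k)}
    (h₀ : Incomp n k x₀ y₀ ∧ Incomp n k x₀ y₁ ∧ CompLt n k x₁ y₀)
    (h₁ : Incomp n k x₁ y₁ ∧ Incomp n k x₁ y₂ ∧ CompLt n k x₂ y₁)
    (h₂ : Incomp n k x₂ y₂ ∧ Incomp n k x₂ y₀ ∧ CompLt n k x₀ y₂) :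
    IsStrictAltCycle n k ![x₀, x₁, x₂] ![y₀, y₁, y₂] :=
  isStrictAltCycle_iff.2 fun α => by fin_cases α; exacts [h₀, h₁, h₂]

theorem le_two_mul_of_isStrictAltCycle [NeZero (n + k)] {x y : ZMod 3 → ZMod (n + k)}
    (h : IsStrictAltCycle n k x y) : n ≤ 2 * k := by
  have := le_three_mul_of_forall_val_sub (isStrictAltCycle_iff.1 h)
  omega

theorem exists_isStrictAltCycle (hn : 3 ≤ n) (h : n ≤ 2 * k) :
    ∃ x y, IsStrictAltCycle n k x y := by
  have : NeZero (n + k) := ⟨by omega⟩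
  rcases le_or_gt n (k + 1) with hsmall | hlarge <;> [
    refine ⟨_, _, isStrictAltCycle_vecCons
      (x₀ := (1 : ℕ)) (x₁ := (2 : ℕ)) (x₂ := (k + 2 : ℕ))
      (y₀ := (1 : ℕ)) (y₁ := (k + 1 : ℕ)) (y₂ := (k + 2 : ℕ))
      ⟨?_, ?_, ?_⟩ ⟨?_, ?_, ?_⟩ ⟨?_, ?_, ?_⟩⟩;
    refine ⟨_, _, isStrictAltCycle_vecCons
      (x₀ := (1 : ℕ)) (x₁ := (k + 1 : ℕ)) (x₂ := (2 * k + 1 : ℕ))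
      (y₀ := (2 * k + 1 - n : ℕ)) (y₁ := (k + 1 : ℕ)) (y₂ := (2 * k + 1 : ℕ))
      ⟨?_, ?_, ?_⟩ ⟨?_, ?_, ?_⟩ ⟨?_, ?_, ?_⟩⟩]
  all_goals
    simp only [Incomp, CompLt]
    rw [ZMod.val_natCast_sub_natCast (by omega) (by omega)]
    split_ifs <;> omega

/-- `b_j → a_i → b_j'` with `(a_i, b_j) ∈ S` and `a_i < b_j'`: a linear extension reversing `S`
must put `b_j` below `b_j'`. -/
def AltStep (n k : ℕ) (S : Set (Pair n k)) (j j' : ZMod (n + k)) : Prop :=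
  ∃ i, (i, j) ∈ S ∧ CompLt n k i j'

variable {S : Set (Pair n k)}

theorem incomp_of_not_altStep {i j j' : ZMod (n + k)} (hij : (i, j) ∈ S)
    (h : ¬ AltStep n k S j j') : Incomp n k i j' :=
  incomp_iff_not_compLt.2 fun hc => h ⟨i, hij, hc⟩

theorem Indep.altStep_asymm (hS : Indep n k S) {j j' : ZMod (n + k)}
    (h : AltStep n k S j j') : ¬ AltStep n k S j' j := by
  rintro ⟨i', hi'S, hi'⟩
  obtain ⟨i, hiS, hi⟩ := h
  exact hS.2 _ hiS _ hi'S ⟨hi, hi'⟩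

theorem Reversible.not_hasPeriodicWalk (h : Reversible n k S) {t : ℕ} (ht : 0 < t) :
    ¬ HasPeriodicWalk (AltStep n k S) t := by
  obtain ⟨f, -, hlt, hrev⟩ := h
  rintro ⟨p, hp, hper⟩
  have hmono : StrictMono fun m => f (.inr (p m)) := strictMono_nat_of_lt_succ fun m => by
    obtain ⟨i, hiS, hi⟩ := hp m
    exact (hrev _ hiS).trans (hlt _ _ hi)
  simpa [hper.eq] using hmono ht

/-- The relation whose topological sorts are the linear extensions of the crown reversing `S`. -/
def ReversingRel (n k : ℕ) (S : Set (Pair n k)) :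
    ZMod (n + k) ⊕ ZMod (n + k) → ZMod (n + k) ⊕ ZMod (n + k) → Prop
  | .inl i, .inr j => CompLt n k i j
  | .inr j, .inl i => (i, j) ∈ S
  | _, _ => False

theorem ReversingRel.exists_eq_inr {i : ZMod (n + k)} {v : ZMod (n + k) ⊕ ZMod (n + k)}
    (h : ReversingRel n k S (.inl i) v) : ∃ j, v = .inr j := by
  rcases v with i' | j
  · exact (h : False).elim
  · exact ⟨j, rfl⟩

theorem ReversingRel.exists_altStep {j : ZMod (n + k)} {u v : ZMod (n + k) ⊕ ZMod (n + k)}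
    (h₁ : ReversingRel n k S (.inr j) u) (h₂ : ReversingRel n k S u v) :
    ∃ j', v = .inr j' ∧ AltStep n k S j j' := by
  rcases u with i | j₁
  · obtain ⟨j', rfl⟩ := ReversingRel.exists_eq_inr h₂
    exact ⟨j', rfl, i, h₁, h₂⟩
  · exact (h₁ : False).elim

theorem hasPeriodicWalk_altStep_of_reversingRel {t : ℕ}
    (h : HasPeriodicWalk (ReversingRel n k S) t) : HasPeriodicWalk (AltStep n k S) t := by
  obtain ⟨p, hp, hper⟩ := h
  obtain ⟨s, hs⟩ : ∃ s, ∃ j, p s = .inr j := by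
    rcases h0 : p 0 with i | j
    · exact ⟨1, ReversingRel.exists_eq_inr (h0 ▸ hp 0)⟩
    · exact ⟨0, j, h0⟩
  have hB : ∀ m, ∃ j, p (s + 2 * m) = .inr j := by
    intro m
    induction m with
    | zero => exact hs
    | succ m ih =>
      obtain ⟨j, hj⟩ := ih
      obtain ⟨j', hj', -⟩ := ReversingRel.exists_altStep (hj ▸ hp _) (hp _)
      exact ⟨j', by rwa [show s + 2 * (m + 1) = s + 2 * m + 1 + 1 by ring]⟩
  choose q hq using hB
  refine ⟨q, fun m => ?_, fun m => Sum.inr_injective (α := ZMod (n + k)) ?_⟩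
  · obtain ⟨j', hj', hstep⟩ := ReversingRel.exists_altStep (hq m ▸ hp _) (hp _)
    have hnext : p (s + 2 * m + 1 + 1) = .inr (q (m + 1)) := by rw [← hq]; ring_nf
    rwa [Sum.inr_injective (hj'.symm.trans hnext)] at hstep
  · rw [← hq, ← hq, show s + 2 * (m + t) = s + 2 * m + 2 * t by ring]
    simpa using hper.nat_mul 2 (s + 2 * m)

theorem reversible_of_forall_not_hasPeriodicWalk [NeZero (n + k)]
    (h : ∀ t, 0 < t → ¬ HasPeriodicWalk (AltStep n k S) t) : Reversible n k S := by
  obtain ⟨f, hf, hmono⟩ := exists_injective_nat_of_forall_not_hasPeriodicWalk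
    (r := ReversingRel n k S) fun t ht hwalk =>
      h t ht (hasPeriodicWalk_altStep_of_reversingRel hwalk)
  exact ⟨f, hf, fun i j hij => hmono _ _ hij, fun p hp => hmono _ _ hp⟩

theorem le_two_mul_of_indep_of_not_reversible (hn : 3 ≤ n) (hS : Indep n k S)
    (hrev : ¬ Reversible n k S) : n ≤ 2 * k := by
  have : NeZero (n + k) := ⟨by omega⟩
  have hcycle : ∃ t, 0 < t ∧ HasPeriodicWalk (AltStep n k S) t := by
    by_contra! h
    exact hrev (reversible_of_forall_not_hasPeriodicWalk h)
  obtain ⟨j₀, j₁, j₂, j₃, ⟨i₀, h₀S, h₀⟩, ⟨i₁, h₁S, h₁⟩, ⟨i₂, h₂S, h₂⟩, h₀₂, h₁₃, h₀₃⟩ :=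
    exists_chordless_path (fun _ _ => hS.altStep_asymm) hcycle
  have h₂₁ : Incomp n k i₂ j₁ :=
    incomp_of_not_altStep h₂S (hS.altStep_asymm ⟨i₁, h₁S, h₁⟩)
  exact le_two_mul_of_isStrictAltCycle (isStrictAltCycle_vecCons
    ⟨incomp_of_not_altStep h₀S h₀₂, incomp_of_not_altStep h₀S h₀₃, h₁⟩
    ⟨incomp_of_not_altStep h₁S h₁₃, hS.1 _ h₁S, h₂⟩ ⟨h₂₁, hS.1 _ h₂S, h₀⟩)

theorem IsStrictAltCycle.exists_indep_not_reversible {x y : ZMod 3 → ZMod (n + k)}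
    (h : IsStrictAltCycle n k x y) : ∃ S : Set (Pair n k), Indep n k S ∧ ¬ Reversible n k S := by
  refine ⟨Set.range fun α => (x α, y α), ⟨?_, ?_⟩, fun hrev => ?_⟩
  · rintro _ ⟨α, rfl⟩
    exact h.1 α
  · rintro _ ⟨α, rfl⟩ _ ⟨β, rfl⟩ ⟨hαβ, hβα⟩
    have hno : ∀ α β : ZMod 3, β = α - 1 → α = β - 1 → False := by decide
    exact hno α β ((h.2 α β).1 hαβ) ((h.2 β α).1 hβα)
  · refine hrev.not_hasPeriodicWalk three_pos ⟨fun m => y (-m), fun m => ⟨x (-m), ⟨_, rfl⟩, ?_⟩,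
      fun m => by simp [show (3 : ZMod 3) = 0 from rfl]⟩
    exact (h.2 _ _).2 (by push_cast; ring)

end

/-- the crown `S_n^k` contains a strict alternating cycle of size `3` iff
`n ≤ 2k`; consequently an independent non-reversible set of critical pairs exists in
`G_n^k` iff `n ≤ 2k`. -/
theorem strictAltCycle3_and_INR_iff (n k : ℕ) (hn : 3 ≤ n) :
    ((∃ x y : ZMod 3 → ZMod (n + k),
        (∀ α : ZMod 3, Incomp n k (x α) (y α)) ∧
        (∀ α β : ZMod 3, (CompLt n k (x α) (y β) ↔ β = α - 1))) ↔ n ≤ 2 * k) ∧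
    ((∃ S : Set (Pair n k), Indep n k S ∧ ¬ Reversible n k S) ↔ n ≤ 2 * k) := by
  have : NeZero (n + k) := ⟨by omega⟩
  have hcycle : (∃ x y, IsStrictAltCycle n k x y) ↔ n ≤ 2 * k :=
    ⟨fun ⟨_, _, h⟩ => le_two_mul_of_isStrictAltCycle h, exists_isStrictAltCycle hn⟩
  refine ⟨hcycle, fun ⟨_, hS, hrev⟩ => le_two_mul_of_indep_of_not_reversible hn hS hrev,
    fun h => ?_⟩
  obtain ⟨x, y, hxy⟩ := hcycle.2 h
  exact hxy.exists_indep_not_reversible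

end CrownPaper
end

section
/- Let n ≥ 3 and k < n ≤ 2k. Then every strict alternating cycle contained in the set of incomparable pairs of the crown S_n^k has size at most 3 (hence exactly 3 if it lies in an independent set of G_n^k). -/
namespace CrownPaper

lemma val_sub_of_le {L : ℕ} [NeZero L] (a b c : ZMod L)
    (h : (b - a).val ≤ (c - a).val) :
    (c - b).val = (c - a).val - (b - a).val := by
  have e1 : (((c - a).val : ℕ) : ZMod L) = c - a := ZMod.natCast_rightInverse _
  have e2 : (((b - a).val : ℕ) : ZMod L) = b - a := ZMod.natCast_rightInverse _
  have h2 : c - b = ((((c - a).val - (b - a).val : ℕ)) : ZMod L) := by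
    rw [Nat.cast_sub h, e1, e2]; ring
  rw [h2, ZMod.val_cast_of_lt]
  exact lt_of_le_of_lt (Nat.sub_le _ _) (ZMod.val_lt _)

lemma four_cycle (n k : ℕ) [NeZero (n + k)] (hkn : k < n)
    (a b c d : ZMod (n + k)) (da db dc dd : ℕ)
    (hda2 : da ≤ n - 1) (hdb2 : db ≤ n - 1) (hdc2 : dc ≤ n - 1) (hdd2 : dd ≤ n - 1)
    (h1 : 0 < (b - a).val)
    (h2 : (b - a).val < (c - a).val)
    (h3 : (c - a).val < (d - a).val)
    (e1a : db ≤ (b - a).val) (e1b : n - da ≤ (b - a).val)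
    (e2a : dc ≤ (c - b).val) (e2b : n - db ≤ (c - b).val)
    (e3a : dd ≤ (d - c).val) (e3b : n - dc ≤ (d - c).val)
    (e4a : da ≤ (a - d).val) (e4b : n - dd ≤ (a - d).val) : False := by
  have q1 : (c - b).val = (c - a).val - (b - a).val :=
    val_sub_of_le a b c (le_of_lt h2)
  have q2 : (d - c).val = (d - a).val - (c - a).val :=
    val_sub_of_le a c d (le_of_lt h3)
  have hda : d - a ≠ 0 := by
    intro h
    rw [h] at h3
    simp at h3
  have q3 : (a - d).val = (n + k) - (d - a).val := by
    have : a - d = -(d - a) := by ring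
    rw [this, ZMod.neg_val, if_neg hda]
  have hL : (d - a).val < n + k := ZMod.val_lt _
  omega

/-- when `k < n ≤ 2k`, every strict alternating cycle among the incomparable
pairs of the crown `S_n^k` has size at most `3`. -/
theorem strictAltCycle_size_le_three (n k m : ℕ) (hn : 3 ≤ n) (hkn : k < n)
    (hn2k : n ≤ 2 * k) (hm : 2 ≤ m) (x y : ZMod m → ZMod (n + k))
    (hinc : ∀ α : ZMod m, Incomp n k (x α) (y α))
    (hstrict : ∀ α β : ZMod m, (CompLt n k (x α) (y β) ↔ β = α - 1)) :
    m ≤ 3 := by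
  by_contra hm4
  push_neg at hm4
  have hm4' : 4 ≤ m := hm4
  haveI : NeZero (n + k) := ⟨by omega⟩
  -- the "forward distance" from y (γ-1) to x γ
  set D : ZMod m → ℕ := fun γ => (x γ - y (γ - 1)).val with hD
  have hA : ∀ γ : ZMod m, k < (y (γ - 1) - x γ).val := fun γ => (hstrict γ (γ - 1)).mpr rfl
  have hDeq : ∀ γ : ZMod m, D γ = (n + k) - (y (γ - 1) - x γ).val := by
    intro γ
    have hne : y (γ - 1) - x γ ≠ 0 := by
      intro h; have := hA γ; rw [h] at this; simp [ZMod.val_zero] at this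
    have : x γ - y (γ - 1) = -(y (γ - 1) - x γ) := by ring
    simp only [hD, this, ZMod.neg_val, if_neg hne]
  have hD1 : ∀ γ : ZMod m, 1 ≤ D γ := by
    intro γ
    have h1 := hA γ
    have h2 : (y (γ - 1) - x γ).val < n + k := ZMod.val_lt _
    rw [hDeq γ]; omega
  have hD2 : ∀ γ : ZMod m, D γ ≤ n - 1 := by
    intro γ
    have h1 := hA γ
    rw [hDeq γ]; omega
  -- non-comparabilities for other indices
  have hB : ∀ γ γ' : ZMod m, γ ≠ γ' → (y (γ - 1) - x γ').val ≤ k := by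
    intro γ γ' hne
    by_contra hc
    push_neg at hc
    have h := (hstrict γ' (γ - 1)).mp hc
    exact hne (sub_left_inj.mp h)
  have hxne : ∀ γ γ' : ZMod m, γ ≠ γ' → x γ ≠ x γ' := by
    intro γ γ' hne heq
    have h1 := hA γ
    rw [heq] at h1
    exact absurd (hB γ γ' hne) (not_le.mpr h1)
  -- key pairwise bounds
  have hhl : ∀ γ γ' : ZMod m, γ ≠ γ' →
      D γ ≤ (x γ - x γ').val ∧ n - D γ ≤ (x γ' - x γ).val := by
    intro γ γ' hne
    have hBv := hB γ γ' hne
    have hDγ1 := hD1 γ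
    have hDγ2 := hD2 γ
    by_cases hc : x γ' = y (γ - 1)
    · constructor
      · rw [hc]
      · have hne0 : x γ - y (γ - 1) ≠ 0 := by
          intro h
          have : D γ = 0 := by rw [hD]; simp [h]
          omega
        have : x γ' - x γ = -(x γ - y (γ - 1)) := by rw [hc]; ring
        rw [this, ZMod.neg_val, if_neg hne0]
        have : (x γ - y (γ - 1)).val = D γ := rfl
        have hlt : (x γ - y (γ - 1)).val < n + k := ZMod.val_lt _
        omega
    · -- x γ' ≠ y (γ - 1); then (x γ' - y (γ-1)).val ≥ n
      have hne0 : y (γ - 1) - x γ' ≠ 0 :=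
        sub_ne_zero.mpr (fun h => hc h.symm)
      have he : (x γ' - y (γ - 1)).val = (n + k) - (y (γ - 1) - x γ').val := by
        have : x γ' - y (γ - 1) = -(y (γ - 1) - x γ') := by ring
        rw [this, ZMod.neg_val, if_neg hne0]
      have hev1 : 1 ≤ (y (γ - 1) - x γ').val := by
        have : y (γ - 1) - x γ' ≠ 0 := hne0
        have := ZMod.val_pos.mpr this
        omega
      have hen : n ≤ (x γ' - y (γ - 1)).val := by rw [he]; omega
      have heL : (x γ' - y (γ - 1)).val ≤ n + k - 1 := by rw [he]; omega
      have hsub : (x γ' - x γ).val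
          = (x γ' - y (γ - 1)).val - (x γ - y (γ - 1)).val := by
        apply val_sub_of_le
        have : (x γ - y (γ - 1)).val = D γ := rfl
        omega
      have hDgval : (x γ - y (γ - 1)).val = D γ := rfl
      constructor
      · have hne1 : x γ' - x γ ≠ 0 := sub_ne_zero.mpr (Ne.symm (hxne γ γ' hne))
        have : x γ - x γ' = -(x γ' - x γ) := by ring
        rw [this, ZMod.neg_val, if_neg hne1, hsub]
        omega
      · rw [hsub]; omega
  -- four distinct indices
  set g : Fin 4 → ZMod m := fun i => ((i.val : ℕ) : ZMod m) with hg
  have hgval : ∀ i : Fin 4, (g i).val = i.val := by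
    intro i
    exact ZMod.val_cast_of_lt (by omega)
  have hgne : ∀ i j : Fin 4, i ≠ j → g i ≠ g j := by
    intro i j hne heq
    apply hne
    have := hgval i
    rw [heq, hgval j] at this
    exact Fin.ext this.symm
  -- the key four-point contradiction
  have key : ∀ b c d : ZMod m, g 0 ≠ b → g 0 ≠ c → g 0 ≠ d →
      (x b - x (g 0)).val < (x c - x (g 0)).val →
      (x c - x (g 0)).val < (x d - x (g 0)).val → False := by
    intro b c d hb hc hd h2 h3
    have h1 : 0 < (x b - x (g 0)).val :=
      ZMod.val_pos.mpr (sub_ne_zero.mpr (Ne.symm (hxne (g 0) b hb)))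
    exact four_cycle n k hkn (x (g 0)) (x b) (x c) (x d)
      (D (g 0)) (D b) (D c) (D d)
      (hD2 _) (hD2 _) (hD2 _) (hD2 _) h1 h2 h3
      (hhl b (g 0) (Ne.symm hb)).1 (hhl (g 0) b hb).2
      (hhl c b (by intro h; rw [h] at h2; omega)).1
      (hhl b c (by intro h; rw [h] at h2; omega)).2
      (hhl d c (by intro h; rw [h] at h3; omega)).1
      (hhl c d (by intro h; rw [h] at h3; omega)).2
      (hhl (g 0) d hd).1 (hhl d (g 0) (Ne.symm hd)).2
  -- distinct p-values, then case on orderings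
  set p : Fin 4 → ℕ := fun i => (x (g i) - x (g 0)).val with hp
  have hpne : ∀ i j : Fin 4, i ≠ j → p i ≠ p j := by
    intro i j hne heq
    apply hxne (g i) (g j) (hgne i j hne)
    have e1 : (((x (g i) - x (g 0)).val : ℕ) : ZMod (n + k)) = x (g i) - x (g 0) :=
      ZMod.natCast_rightInverse _
    have e2 : (((x (g j) - x (g 0)).val : ℕ) : ZMod (n + k)) = x (g j) - x (g 0) :=
      ZMod.natCast_rightInverse _
    have h3 : x (g i) - x (g 0) = x (g j) - x (g 0) := by
      rw [← e1, ← e2]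
      exact congrArg (fun t : ℕ => ((t : ℕ) : ZMod (n + k))) heq
    exact sub_left_inj.mp h3
  have h01 : g 0 ≠ g 1 := hgne 0 1 (by decide)
  have h02 : g 0 ≠ g 2 := hgne 0 2 (by decide)
  have h03 : g 0 ≠ g 3 := hgne 0 3 (by decide)
  rcases (hpne 1 2 (by decide)).lt_or_gt with h12 | h12 <;>
    rcases (hpne 1 3 (by decide)).lt_or_gt with h13 | h13 <;>
      rcases (hpne 2 3 (by decide)).lt_or_gt with h23 | h23
  · exact key (g 1) (g 2) (g 3) h01 h02 h03 h12 h23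
  · exact key (g 1) (g 3) (g 2) h01 h03 h02 h13 h23
  · omega
  · exact key (g 3) (g 1) (g 2) h03 h01 h02 h13 h12
  · exact key (g 2) (g 1) (g 3) h02 h01 h03 h12 h13
  · omega
  · exact key (g 2) (g 3) (g 1) h02 h03 h01 h23 h13
  · exact key (g 3) (g 2) (g 1) h03 h02 h01 h23 h12

end CrownPaper
end

section
/- Let n ≥ 3, k ≥ 0, and let S be a maximal independent non-reversible set of critical pairs in G_n^k. Then S contains a strict alternating cycle of size exactly 3. -/
/-!
Non-reversibility of `S` yields, by the alternating cycle lemma, a cycle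
`p₁ → p₂ → ⋯ → pₘ → p₁` of pairs of `S`, where `p → q` means `a_p < b_q`; since pairs are
incomparable and `S` is independent, `m ≥ 3`. The pair `w = (a_{p₃}, b_{p₂})` is incomparable
because `p₂` and `p₃` are not adjacent. If `w` is adjacent to some `u ∈ S`, then
`p₂ → p₃ → u → p₂` is a 3-cycle; otherwise maximality puts `w` into `S`, and replacing `p₂, p₃`
by `w` shortens the cycle. In an independent set every 3-cycle is strict.
-/

namespace CrownPaper

open Relation Finset

section Relations

variable {α β : Type*}

theorem exists_injective_nat_of_acyclic [Finite α] {r : α → α → Prop}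
    (h : ∀ a, ¬ TransGen r a a) :
    ∃ f : α → ℕ, Function.Injective f ∧ ∀ a b, r a b → f a < f b := by
  classical
  cases nonempty_fintype α
  let e := Fintype.equivFin α
  let height (a : α) : ℕ := #{x | TransGen r x a}
  have height_lt {a b : α} (hab : r a b) : height a < height b := by
    refine card_lt_card ((ssubset_iff_of_subset fun x hx => ?_).mpr ⟨a, ?_, ?_⟩)
    · simp only [mem_filter, mem_univ, true_and] at hx ⊢
      exact hx.tail hab
    · simpa using TransGen.single hab
    · simpa using h a
  -- order by `height`, breaking ties by the enumeration `e`
  refine ⟨fun a => height a * Fintype.card α + e a, fun a b hab => e.injective ?_, ?_⟩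
  · have := congrArg (· % Fintype.card α) hab
    simp only [Nat.mul_add_mod_of_lt (e _).isLt] at this
    exact Fin.ext this
  · intro a b hab
    have := height_lt hab
    have := (e a).isLt
    nlinarith

theorem exists_isChain_of_transGen {r : α → α → Prop} {a b : α} (h : TransGen r a b) :
    ∃ l, List.IsChain r (a :: l ++ [b]) := by
  induction h using TransGen.head_induction_on with
  | single h => exact ⟨[], List.isChain_pair.mpr h⟩
  | head h _ ih =>
    obtain ⟨l, hl⟩ := ih
    exact ⟨_ :: l, hl.cons_cons h⟩

def BipartiteRel (r : α → β → Prop) (s : β → α → Prop) : α ⊕ β → α ⊕ β → Prop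
  | .inl a, .inr b => r a b
  | .inr b, .inl a => s b a
  | _, _ => False

variable {r : α → β → Prop} {s : β → α → Prop}

theorem reflTransGen_bipartiteRel_inl {a : α} {y : α ⊕ β}
    (h : ReflTransGen (BipartiteRel r s) (.inl a) y) :
    y.elim (ReflTransGen (Comp r s) a) fun b => ∃ a', ReflTransGen (Comp r s) a a' ∧ r a' b := by
  induction h with
  | refl => exact .refl
  | @tail y z _ hyz ih =>
    rcases y with a' | b <;> rcases z with _ | _
    · exact hyz.elim
    · exact ⟨a', ih, hyz⟩
    · obtain ⟨a', ih, hab⟩ := ih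
      exact ih.tail ⟨b, hab, hyz⟩
    · exact hyz.elim

theorem exists_transGen_comp_of_transGen_bipartiteRel {x : α ⊕ β}
    (h : TransGen (BipartiteRel r s) x x) : ∃ a, TransGen (Comp r s) a a := by
  obtain ⟨b, hb⟩ : ∃ b, TransGen (BipartiteRel r s) (.inr b) (.inr b) := by
    rcases x with a | b
    · obtain ⟨_ | b, hab, hba⟩ := TransGen.head'_iff.mp h
      · exact hab.elim
      · exact ⟨b, TransGen.tail' hba hab⟩
    · exact ⟨b, h⟩
  obtain ⟨_ | b', hba, hab⟩ := TransGen.head'_iff.mp hb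
  · obtain ⟨a', hpath, hr⟩ := reflTransGen_bipartiteRel_inl hab
    exact ⟨_, TransGen.tail' hpath ⟨b, hr, hba⟩⟩
  · exact hba.elim

end Relations

section Crown

variable {n k : ℕ} {S : Set (Pair n k)}

/-- Cycles of this digraph on `S` are the alternating cycles of `S`. -/
def Arc (n k : ℕ) (S : Set (Pair n k)) (p q : Pair n k) : Prop :=
  q ∈ S ∧ CompLt n k p.1 q.2

def HasSAC3 (n k : ℕ) (S : Set (Pair n k)) : Prop :=
  ∃ x y : ZMod 3 → ZMod (n + k),
    (∀ α : ZMod 3, (x α, y α) ∈ S) ∧ ∀ α β : ZMod 3, (CompLt n k (x α) (y β) ↔ β = α - 1)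

theorem isIncPair_iff_not_compLt {p : Pair n k} : IsIncPair n k p ↔ ¬ CompLt n k p.1 p.2 :=
  not_lt.symm

theorem mem_of_forall_not_adj (hI : Indep n k S)
    (hmax : ∀ S' : Set (Pair n k), S ⊆ S' → Indep n k S' → S' = S) {w : Pair n k}
    (hw : IsIncPair n k w) (hadj : ∀ u ∈ S, ¬ Adj n k w u) : w ∈ S := by
  have hindep : Indep n k (insert w S) := by
    refine ⟨Set.forall_mem_insert.mpr ⟨hw, hI.1⟩, ?_⟩
    rintro p (rfl | hp) q (rfl | hq)
    · exact fun h => isIncPair_iff_not_compLt.mp hw h.1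
    · exact hadj q hq
    · exact fun h => hadj p hp (And.symm h)
    · exact hI.2 p hp q hq
  rw [← hmax _ (Set.subset_insert w S) hindep]
  exact Set.mem_insert w S

theorem hasSAC3_of_triangle (hI : Indep n k S) {p q r : Pair n k} (hp : p ∈ S) (hq : q ∈ S)
    (hr : r ∈ S) (hpq : CompLt n k p.1 q.2) (hqr : CompLt n k q.1 r.2)
    (hrp : CompLt n k r.1 p.2) : HasSAC3 n k S := by
  let t : ZMod 3 → Pair n k := ![p, r, q]
  have ht : ∀ α, t α ∈ S := by
    intro α; fin_cases α <;> assumption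
  have harc : ∀ α, CompLt n k (t α).1 (t (α - 1)).2 := by
    intro α; fin_cases α <;> assumption
  have hcases : ∀ α β : ZMod 3, β = α - 1 ∨ β = α ∨ β = α + 1 := by decide
  refine ⟨fun α => (t α).1, fun α => (t α).2, ht, fun α β => ?_⟩
  rcases hcases α β with h | h | h <;> subst β
  · exact iff_of_true (harc α) rfl
  · exact iff_of_false (isIncPair_iff_not_compLt.mp (hI.1 _ (ht α))) (by decide +revert)
  · refine iff_of_false (fun h => hI.2 _ (ht α) _ (ht (α + 1)) ⟨h, ?_⟩) (by decide +revert)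
    simpa using harc (α + 1)

theorem hasSAC3_of_isChain_arc (hI : Indep n k S)
    (hmax : ∀ S' : Set (Pair n k), S ⊆ S' → Indep n k S' → S' = S) :
    ∀ (a : Pair n k) (l : List (Pair n k)), List.IsChain (Arc n k S) (a :: l ++ [a]) →
      HasSAC3 n k S
  | a, [], h => by
    obtain ⟨ha, haa⟩ := List.isChain_pair.mp h
    exact (isIncPair_iff_not_compLt.mp (hI.1 a ha) haa).elim
  | a, [b], h => by
    obtain ⟨⟨hb, hab⟩, h⟩ := List.isChain_cons_cons.mp h
    obtain ⟨ha, hba⟩ := List.isChain_pair.mp h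
    exact (hI.2 a ha b hb ⟨hab, hba⟩).elim
  | a, b :: c :: t, h => by
    obtain ⟨⟨hb, hab⟩, h⟩ := List.isChain_cons_cons.mp h
    obtain ⟨⟨hc, hbc⟩, hrest⟩ := List.isChain_cons_cons.mp h
    let w : Pair n k := (c.1, b.2)
    by_cases hw : ∀ u ∈ S, ¬ Adj n k w u
    · have hwS : w ∈ S := mem_of_forall_not_adj hI hmax
        (isIncPair_iff_not_compLt.mpr fun hcb => hI.2 b hb c hc ⟨hbc, hcb⟩) hw
      -- `Arc n k S w` and `Arc n k S c` coincide, since `w.1 = c.1`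
      have hwrest : List.IsChain (Arc n k S) (w :: t ++ [a]) := by
        obtain ⟨hhead, htail⟩ := List.isChain_cons.mp hrest
        exact List.isChain_cons.mpr ⟨hhead, htail⟩
      exact hasSAC3_of_isChain_arc hI hmax a (w :: t) (hwrest.cons_cons ⟨hwS, hab⟩)
    · push Not at hw
      obtain ⟨u, hu, hcu, hub⟩ := hw
      exact hasSAC3_of_triangle hI hb hc hu hbc hcu hub
termination_by _ l => l.length

theorem transGen_arc_of_transGen_comp {i i' : ZMod (n + k)}
    (h : TransGen (Comp (CompLt n k) fun j i => (i, j) ∈ S) i i') :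
    ∃ j', ∀ j, TransGen (Arc n k S) (i, j) (i', j') := by
  induction h with
  | single h =>
    obtain ⟨j', hij', hj'⟩ := h
    exact ⟨j', fun j => .single ⟨hj', hij'⟩⟩
  | tail _ h ih =>
    obtain ⟨j'', ih⟩ := ih
    obtain ⟨j', hij', hj'⟩ := h
    exact ⟨j', fun j => (ih j).tail ⟨hj', hij'⟩⟩

theorem exists_transGen_arc_of_not_reversible [NeZero (n + k)] (hNR : ¬ Reversible n k S) :
    ∃ p, TransGen (Arc n k S) p p := by
  by_contra hacyc
  obtain ⟨f, hf, hmono⟩ := exists_injective_nat_of_acyclic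
    (r := BipartiteRel (CompLt n k) fun j i => (i, j) ∈ S) fun x hx => by
      obtain ⟨i, hi⟩ := exists_transGen_comp_of_transGen_bipartiteRel hx
      obtain ⟨j, hj⟩ := transGen_arc_of_transGen_comp hi
      exact hacyc ⟨_, hj j⟩
  exact hNR ⟨f, hf, fun i j => hmono (.inl i) (.inr j),
    fun p hp => hmono (.inr p.2) (.inl p.1) hp⟩

end Crown

/-- a maximal independent non-reversible set of critical pairs in `G_n^k`
contains a strict alternating cycle of size exactly `3`. -/
theorem maximal_INR_contains_sac3 (n k : ℕ) (hn : 3 ≤ n) (S : Set (Pair n k))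
    (hI : Indep n k S) (hNR : ¬ Reversible n k S)
    (hmax : ∀ S' : Set (Pair n k), S ⊆ S' → Indep n k S' → S' = S) :
    ∃ x y : ZMod 3 → ZMod (n + k),
      (∀ α : ZMod 3, (x α, y α) ∈ S) ∧
      ∀ α β : ZMod 3, (CompLt n k (x α) (y β) ↔ β = α - 1) := by
  have : NeZero (n + k) := ⟨by omega⟩
  obtain ⟨p, hp⟩ := exists_transGen_arc_of_not_reversible hNR
  obtain ⟨l, hl⟩ := exists_isChain_of_transGen hp
  exact hasSAC3_of_isChain_arc hI hmax p l hl

end CrownPaper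
end

section
/- Let n ≥ 3 and k ≥ 0, and let R be a reversible set of incomparable pairs of the crown S_n^k. Then |R| ≤ (k+1)(k+2)/2. In other words, no linear extension of S_n^k reverses more than (k+1)(k+2)/2 critical pairs. -/
namespace CrownPaper

open Finset

private lemma gauss (N : ℕ) : ∑ i ∈ Finset.Icc 1 N, i = N * (N + 1) / 2 := by
  induction N with
  | zero => simp
  | succ n ih =>
    rw [Finset.sum_Icc_succ_top (by omega), ih]
    have h2 : 2 ∣ n * (n+1) := (Nat.even_mul_succ_self n).two_dvd
    have h3 : (n+1) * (n+1+1) = n*(n+1) + 2*(n+1) := by ring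
    omega

lemma core {M k : ℕ} (hM : k + 3 ≤ M) (A L : Finset (ZMod M))
    (hA : A.Nonempty) (hL : L.Nonempty)
    (h : ∀ i ∈ A, ∀ c ∈ L, (c - i).val ≤ k) :
    A.card + L.card ≤ k + 2 := by
  haveI : NeZero M := ⟨by omega⟩
  obtain ⟨x₀, hx₀⟩ := hA
  obtain ⟨c₁, hc₁L, hmax⟩ := L.exists_max_image (fun c => (c - x₀).val) hL
  set W : Finset (ZMod M) := (Finset.range (k+2)).image (fun t : ℕ => c₁ + 1 - (t : ZMod M)) with hW
  have hWcard : W.card = k + 2 := by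
    rw [hW, Finset.card_image_of_injOn, Finset.card_range]
    intro a ha b hb hab
    simp only [Finset.mem_coe, Finset.mem_range] at ha hb
    have : ((a : ZMod M)) = (b : ZMod M) := by
      simp only at hab
      have : c₁ + 1 - (a:ZMod M) = c₁ + 1 - (b:ZMod M) := hab
      linear_combination -this
    have := congrArg ZMod.val this
    rwa [ZMod.val_cast_of_lt (by omega), ZMod.val_cast_of_lt (by omega)] at this
  have hAW : A ⊆ W := by
    intro i hi
    have hs : (c₁ - i).val ≤ k := h i hi c₁ hc₁L
    rw [hW, Finset.mem_image]
    refine ⟨(c₁ - i).val + 1, Finset.mem_range.mpr (by omega), ?_⟩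
    push_cast
    rw [ZMod.natCast_rightInverse (c₁ - i)]
    ring
  have hLW : ∀ c ∈ L, c + 1 ∈ W := by
    intro c hc
    have hle : (c - x₀).val ≤ (c₁ - x₀).val := hmax c hc
    have hk : (c₁ - x₀).val ≤ k := h x₀ hx₀ c₁ hc₁L
    rw [hW, Finset.mem_image]
    refine ⟨(c₁ - x₀).val - (c - x₀).val, Finset.mem_range.mpr (by omega), ?_⟩
    rw [Nat.cast_sub hle, ZMod.natCast_rightInverse (c₁ - x₀),
      ZMod.natCast_rightInverse (c - x₀)]
    ring
  have hdisj : Disjoint A (L.image (· + 1)) := by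
    rw [Finset.disjoint_right]
    intro x hx hxA
    obtain ⟨c, hc, rfl⟩ := Finset.mem_image.mp hx
    have := h _ hxA c hc
    have hone : (1 : ZMod M).val = 1 := by
      rw [ZMod.val_one_eq_one_mod]; exact Nat.mod_eq_of_lt (by omega)
    have : (c - (c + 1)).val = M - 1 := by
      have : c - (c + 1) = -1 := by ring
      rw [this, ZMod.neg_val, if_neg (by
        intro h1
        have := congrArg ZMod.val h1
        rw [hone, ZMod.val_zero] at this
        omega), hone]
    omega
  have hcard : A.card + L.card ≤ (A ∪ L.image (· + 1)).card := by
    rw [Finset.card_union_of_disjoint hdisj,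
      Finset.card_image_of_injective _ (add_left_injective 1)]
  calc A.card + L.card ≤ (A ∪ L.image (· + 1)).card := hcard
    _ ≤ W.card := Finset.card_le_card (Finset.union_subset hAW (fun x hx => by
        obtain ⟨c, hc, rfl⟩ := Finset.mem_image.mp hx; exact hLW c hc))
    _ = k + 2 := hWcard

/-- a reversible set of incomparable pairs of the crown `S_n^k` has at most
`(k+1)(k+2)/2` elements. -/
theorem reversible_card_le (n k : ℕ) (hn : 3 ≤ n) (R : Set (Pair n k))
    (hinc : ∀ p ∈ R, IsIncPair n k p) (hrev : Reversible n k R) :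
    R.ncard ≤ (k + 1) * (k + 2) / 2 := by
  classical
  obtain ⟨f, hfinj, hfcomp, hfrev⟩ := hrev
  haveI : NeZero (n + k) := ⟨by omega⟩
  have hfin : R.Finite := Set.toFinite R
  set Rf : Finset (Pair n k) := hfin.toFinset with hRf
  have hncard : R.ncard = Rf.card := Set.ncard_eq_toFinset_card R hfin
  set B : Finset (ZMod (n + k)) := Rf.image Prod.snd with hB
  have hsplit : Rf.card = ∑ j ∈ B, (Rf.filter fun p => p.2 = j).card :=
    Finset.card_eq_sum_card_fiberwise (fun p hp => Finset.mem_image_of_mem _ hp)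
  set rank : ZMod (n + k) → ℕ :=
    fun j => (B.filter fun j' => f (Sum.inr j') ≤ f (Sum.inr j)).card with hrank
  set fib : ZMod (n + k) → ℕ := fun j => (Rf.filter fun p => p.2 = j).card with hfib
  -- basic facts
  have hmemR : ∀ p ∈ Rf, p ∈ R := fun p hp => (Set.Finite.mem_toFinset hfin).mp hp
  have hrank1 : ∀ j ∈ B, 1 ≤ rank j := by
    intro j hj
    have : j ∈ B.filter fun j' => f (Sum.inr j') ≤ f (Sum.inr j) :=
      Finset.mem_filter.mpr ⟨hj, le_refl _⟩
    exact Finset.card_pos.mpr ⟨j, this⟩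
  have hfib1 : ∀ j ∈ B, 1 ≤ fib j := by
    intro j hj
    obtain ⟨p, hp, hpj⟩ := Finset.mem_image.mp hj
    exact Finset.card_pos.mpr ⟨p, Finset.mem_filter.mpr ⟨hp, hpj⟩⟩
  -- core bound per fiber
  have hcore : ∀ j ∈ B, fib j + rank j ≤ k + 2 := by
    intro j hj
    set A : Finset (ZMod (n + k)) := (Rf.filter fun p => p.2 = j).image Prod.fst with hA
    have hAcard : A.card = fib j := by
      rw [hA, hfib]
      apply Finset.card_image_of_injOn
      intro p hp q hq hpq
      have hp2 := (Finset.mem_filter.mp hp).2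
      have hq2 := (Finset.mem_filter.mp hq).2
      exact Prod.ext hpq (hp2.trans hq2.symm)
    have hAne : A.Nonempty := by
      obtain ⟨p, hp, hpj⟩ := Finset.mem_image.mp hj
      exact ⟨p.1, Finset.mem_image.mpr ⟨p, Finset.mem_filter.mpr ⟨hp, hpj⟩, rfl⟩⟩
    have hLne : (B.filter fun j' => f (Sum.inr j') ≤ f (Sum.inr j)).Nonempty :=
      ⟨j, Finset.mem_filter.mpr ⟨hj, le_refl _⟩⟩
    have hhyp : ∀ i ∈ A, ∀ c ∈ (B.filter fun j' => f (Sum.inr j') ≤ f (Sum.inr j)),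
        (c - i).val ≤ k := by
      intro i hi c hc
      obtain ⟨p, hp, hpi⟩ := Finset.mem_image.mp hi
      have hpR : p ∈ R := hmemR p (Finset.mem_filter.mp hp).1
      have hpj : p.2 = j := (Finset.mem_filter.mp hp).2
      have hrevp : f (Sum.inr p.2) < f (Sum.inl p.1) := hfrev p hpR
      have hcle : f (Sum.inr c) ≤ f (Sum.inr j) := (Finset.mem_filter.mp hc).2
      by_contra hcon
      have : f (Sum.inl i) < f (Sum.inr c) := hfcomp i c (by
        simpa [CompLt] using Nat.lt_of_not_le hcon)
      rw [← hpi] at this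
      rw [hpj] at hrevp
      omega
    have := core (by omega) A _ hAne hLne hhyp
    have hrr : rank j = (B.filter fun j' => f (Sum.inr j') ≤ f (Sum.inr j)).card := rfl
    omega
  -- rank is injective on B
  have hrinj : Set.InjOn rank B := by
    intro j₁ hj₁ j₂ hj₂ heq
    by_contra hne
    have hfne : f (Sum.inr j₁) ≠ f (Sum.inr j₂) := fun h =>
      hne (Sum.inr.inj (hfinj h))
    rcases Nat.lt_or_ge (f (Sum.inr j₁)) (f (Sum.inr j₂)) with hlt | hge
    · have hss : (B.filter fun j' => f (Sum.inr j') ≤ f (Sum.inr j₁)) ⊂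
          (B.filter fun j' => f (Sum.inr j') ≤ f (Sum.inr j₂)) := by
        constructor
        · intro x hx
          have := Finset.mem_filter.mp hx
          exact Finset.mem_filter.mpr ⟨this.1, this.2.trans (le_of_lt hlt)⟩
        · intro hsub
          have : j₂ ∈ (B.filter fun j' => f (Sum.inr j') ≤ f (Sum.inr j₁)) :=
            hsub (Finset.mem_filter.mpr ⟨hj₂ , le_refl _⟩)
          have := (Finset.mem_filter.mp this).2
          omega
      have := Finset.card_lt_card hss
      simp only [hrank] at heq; omega
    · have hlt2 : f (Sum.inr j₂) < f (Sum.inr j₁) := by omega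
      have hss : (B.filter fun j' => f (Sum.inr j') ≤ f (Sum.inr j₂)) ⊂
          (B.filter fun j' => f (Sum.inr j') ≤ f (Sum.inr j₁)) := by
        constructor
        · intro x hx
          have := Finset.mem_filter.mp hx
          exact Finset.mem_filter.mpr ⟨this.1, this.2.trans (le_of_lt hlt2)⟩
        · intro hsub
          have : j₁ ∈ (B.filter fun j' => f (Sum.inr j') ≤ f (Sum.inr j₂)) :=
            hsub (Finset.mem_filter.mpr ⟨hj₁ , le_refl _⟩)
          have := (Finset.mem_filter.mp this).2
          omega
      have := Finset.card_lt_card hss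
      simp only [hrank] at heq; omega
  have hranktop : ∀ j ∈ B, rank j ≤ k + 1 := by
    intro j hj
    have := hcore j hj
    have := hfib1 j hj
    omega
  -- the injection j ↦ k + 2 - rank j into Icc 1 (k+1)
  set e : ZMod (n + k) → ℕ := fun j => k + 2 - rank j with he
  have heinj : Set.InjOn e B := by
    intro j₁ hj₁ j₂ hj₂ heq
    apply hrinj hj₁ hj₂
    have h1 := hranktop j₁ hj₁
    have h2 := hranktop j₂ hj₂
    rw [he] at heq
    simp only at heq
    omega
  have hesub : B.image e ⊆ Finset.Icc 1 (k + 1) := by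
    intro y hy
    obtain ⟨j, hj, rfl⟩ := Finset.mem_image.mp hy
    have h1 := hrank1 j hj
    have h2 := hranktop j hj
    rw [Finset.mem_Icc, he]
    constructor <;> simp <;> omega
  calc R.ncard = ∑ j ∈ B, fib j := by rw [hncard, hsplit]
    _ ≤ ∑ j ∈ B, e j := by
        apply Finset.sum_le_sum
        intro j hj
        have := hcore j hj
        rw [he]; simp only; omega
    _ = ∑ y ∈ B.image e, y := by
        have hsumim : ∑ y ∈ B.image e, (y : ℕ) = ∑ j ∈ B, e j :=
          Finset.sum_image (fun a ha b hb hab => heinj ha hb hab)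
        exact hsumim.symm
    _ ≤ ∑ y ∈ Finset.Icc 1 (k + 1), y :=
        Finset.sum_le_sum_of_subset hesub
    _ = (k + 1) * (k + 2) / 2 := gauss (k + 1)

end CrownPaper
end

section
/- Let n ≥ 3, k ≥ 0, and let σ = (x_1,...,x_{k+1}) be an h-contiguous sequence of minimal elements of the crown S_n^k. Then the associated set T(σ) is reversible, is a maximal independent set in G_n^k, and has exactly (k+1)(k+2)/2 elements. -/
namespace CrownPaper

/-- A subset of the minimal elements (indices) is contiguous when it is a cyclic interval. -/
def Contiguous (n k : ℕ) (X : Set (ZMod (n + k))) : Prop :=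
  ∃ (s : ZMod (n + k)) (r : ℕ), X = (fun t : ℕ => s + (t : ZMod (n + k))) '' {t | t < r}

/-- An `h`-contiguous sequence of `k+1` distinct minimal elements: every initial segment
is contiguous. -/
def HContiguous (n k : ℕ) (σ : Fin (k + 1) → ZMod (n + k)) : Prop :=
  Function.Injective σ ∧ ∀ i : Fin (k + 1), Contiguous n k (σ '' {j | j ≤ i})

/-- The canonical reversible set `T(σ)` associated with an `h`-contiguous sequence `σ`:
`(σ i, b) ∈ T(σ)` iff `(σ j, b)` is incomparable for every `j ≤ i`. -/
def Tset (n k : ℕ) (σ : Fin (k + 1) → ZMod (n + k)) : Set (Pair n k) :=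
  {p | ∃ i : Fin (k + 1), p.1 = σ i ∧ ∀ j : Fin (k + 1), j ≤ i → Incomp n k (σ j) p.2}


-- ### basic ZMod helpers

section Basics
variable {n k : ℕ}

lemma cast_inj (hn : 3 ≤ n) {c c' : ℕ} (hc : c < n + k) (hc' : c' < n + k)
    (h : (c : ZMod (n + k)) = (c' : ZMod (n + k))) : c = c' := by
  have := congrArg ZMod.val h
  rwa [ZMod.val_natCast, ZMod.val_natCast, Nat.mod_eq_of_lt hc, Nat.mod_eq_of_lt hc'] at this

lemma val_cast_back (hn : 3 ≤ n) (x : ZMod (n + k)) : ((x.val : ℕ) : ZMod (n + k)) = x := by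
  haveI : NeZero (n + k) := ⟨by omega⟩
  exact ZMod.natCast_rightInverse x

lemma val_lt' (hn : 3 ≤ n) (x : ZMod (n + k)) : x.val < n + k := by
  haveI : NeZero (n + k) := ⟨by omega⟩
  exact ZMod.val_lt x

lemma key_val_mod (hn : 3 ≤ n) (s : ZMod (n + k)) {c1 c2 : ℕ} (h : c1 ≤ c2) :
    ((s + (c2 : ZMod (n + k))) - (s + (c1 : ZMod (n + k)))).val = (c2 - c1) % (n + k) := by
  have he : (s + (c2 : ZMod (n + k))) - (s + (c1 : ZMod (n + k)))
      = ((c2 - c1 : ℕ) : ZMod (n + k)) := by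
    rw [Nat.cast_sub h]; ring
  rw [he, ZMod.val_natCast]

lemma key_val (hn : 3 ≤ n) (s : ZMod (n + k)) {c1 c2 : ℕ} (h : c1 ≤ c2)
    (h2 : c2 - c1 < n + k) :
    ((s + (c2 : ZMod (n + k))) - (s + (c1 : ZMod (n + k)))).val = c2 - c1 := by
  rw [key_val_mod hn s h, Nat.mod_eq_of_lt h2]

lemma sub_add_val (hn : 3 ≤ n) (x y : ZMod (n + k)) (m : ℕ) :
    ((y + (m : ZMod (n + k))) - x).val = ((y - x).val + m) % (n + k) := by
  have he : (y + (m : ZMod (n + k))) - x = (((y - x).val + m : ℕ) : ZMod (n + k)) := by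
    rw [Nat.cast_add, val_cast_back hn]; ring
  rw [he, ZMod.val_natCast]

lemma eq_add_val (hn : 3 ≤ n) (a b : ZMod (n + k)) :
    b = a + (((b - a).val : ℕ) : ZMod (n + k)) := by
  rw [val_cast_back hn]; ring

lemma add_add_cast (s : ZMod (n + k)) (e m : ℕ) :
    (s + (e : ZMod (n + k))) + (m : ZMod (n + k)) = s + ((e + m : ℕ) : ZMod (n + k)) := by
  push_cast; ring

end Basics

-- ### structure extraction

lemma struct {n k : ℕ} (hn : 3 ≤ n) (σ : Fin (k + 1) → ZMod (n + k))
    (hσ : HContiguous n k σ) :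
    ∃ (s : ZMod (n + k)) (d : Fin (k + 1) → ℕ),
      (∀ i : Fin (k + 1), d i + i.val ≤ k) ∧
      (∀ i : Fin (k + 1), ∀ j, j ≤ i →
        ∃ c, d i ≤ c ∧ c ≤ d i + i.val ∧ σ j = s + (c : ZMod (n + k))) ∧
      (∀ i : Fin (k + 1), ∀ c, d i ≤ c → c ≤ d i + i.val →
        ∃ j, j ≤ i ∧ σ j = s + (c : ZMod (n + k))) := by
  classical
  haveI : NeZero (n + k) := ⟨by omega⟩
  have key : ∀ i : Fin (k + 1), ∃ s : ZMod (n + k),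
      (∀ j, j ≤ i → ∃ t, t ≤ i.val ∧ σ j = s + (t : ZMod (n + k))) ∧
      (∀ t, t ≤ i.val → ∃ j, j ≤ i ∧ σ j = s + (t : ZMod (n + k))) := by
    intro i
    obtain ⟨s, r, himg⟩ := hσ.2 i
    have hcard1 : (σ '' {j | j ≤ i}).ncard = i.val + 1 := by
      rw [Set.ncard_image_of_injective _ hσ.1]
      have : {j : Fin (k+1) | j ≤ i} = ↑(Finset.Iic i) := by ext j; simp
      rw [this, Set.ncard_coe_finset, Fin.card_Iic]
    have hr : r ≤ n + k := by
      by_contra hr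
      push_neg at hr
      have huniv : σ '' {j | j ≤ i} = Set.univ := by
        rw [himg]
        apply Set.eq_univ_of_forall
        intro x
        exact ⟨(x - s).val, by have := val_lt' hn (x - s); simp only [Set.mem_setOf_eq]; omega,
          by simpa using (eq_add_val hn s x).symm⟩
      rw [huniv, Set.ncard_univ, Nat.card_eq_fintype_card, ZMod.card] at hcard1
      have := i.isLt
      omega
    have hinj : Set.InjOn (fun t : ℕ => s + (t : ZMod (n + k))) {t | t < r} := by
      intro t ht t' ht' hh
      simp only [Set.mem_setOf_eq] at ht ht'
      have : (t : ZMod (n + k)) = (t' : ZMod (n + k)) := by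
        have := hh; simpa using this
      exact cast_inj hn (by omega) (by omega) this
    have hcard2 : ((fun t : ℕ => s + (t : ZMod (n + k))) '' {t | t < r}).ncard = r := by
      rw [Set.ncard_image_of_injOn hinj]
      have : {t : ℕ | t < r} = Set.Iio r := rfl
      rw [this, ← Nat.card_coe_set_eq]
      simp [Nat.card_eq_fintype_card]
    have hri : r = i.val + 1 := by rw [← hcard2, ← himg, hcard1]
    refine ⟨s, ?_, ?_⟩
    · intro j hj
      have : σ j ∈ σ '' {j | j ≤ i} := ⟨j, hj, rfl⟩
      rw [himg] at this
      obtain ⟨t, ht, hts⟩ := this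
      exact ⟨t, by simp only [Set.mem_setOf_eq] at ht; omega, hts.symm⟩
    · intro t ht
      have : s + (t : ZMod (n + k)) ∈ σ '' {j | j ≤ i} := by
        rw [himg]; exact ⟨t, by simp only [Set.mem_setOf_eq]; omega, rfl⟩
      obtain ⟨j, hj, hjs⟩ := this
      exact ⟨j, hj, hjs⟩
  obtain ⟨s, hsf, hsb⟩ := key (Fin.last k)
  have main : ∀ i : Fin (k + 1), ∃ di : ℕ,
      di + i.val ≤ k ∧
      (∀ j, j ≤ i → ∃ c, di ≤ c ∧ c ≤ di + i.val ∧ σ j = s + (c : ZMod (n + k))) ∧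
      (∀ c, di ≤ c → c ≤ di + i.val → ∃ j, j ≤ i ∧ σ j = s + (c : ZMod (n + k))) := by
    intro i
    obtain ⟨si, hif, hib⟩ := key i
    -- every point of the i-th interval is in the big window
    have exc : ∀ t, t ≤ i.val → ∃ c, c ≤ k ∧ si + (t : ZMod (n + k)) = s + (c : ZMod (n + k)) := by
      intro t ht
      obtain ⟨j, _, hji⟩ := hib t ht
      obtain ⟨c, hc, hcj⟩ := hsf j (Fin.le_last j)
      exact ⟨c, by simpa using hc, by rw [← hji, hcj]⟩
    obtain ⟨d0, hd0k, hd0⟩ := exc 0 (Nat.zero_le _)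
    have St : ∀ t, t ≤ i.val →
        d0 + t ≤ k ∧ si + (t : ZMod (n + k)) = s + ((d0 + t : ℕ) : ZMod (n + k)) := by
      intro t
      induction t with
      | zero =>
        intro _
        refine ⟨by omega, ?_⟩
        simpa using hd0
      | succ t ih =>
        intro ht
        obtain ⟨hk, he⟩ := ih (by omega)
        obtain ⟨c, hck, hc⟩ := exc (t + 1) ht
        have h2 : si + ((t + 1 : ℕ) : ZMod (n + k)) = s + ((d0 + t + 1 : ℕ) : ZMod (n + k)) := by
          push_cast
          push_cast at he
          rw [← add_assoc, he]; ring
        have hcc : (c : ZMod (n + k)) = ((d0 + t + 1 : ℕ) : ZMod (n + k)) := by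
          have := hc.symm.trans h2
          exact add_left_cancel this
        have : c = d0 + t + 1 := cast_inj hn (by omega) (by omega) hcc
        refine ⟨by omega, by rw [h2]; congr 2⟩
    refine ⟨d0, ?_, ?_, ?_⟩
    · exact (St i.val le_rfl).1
    · intro j hj
      obtain ⟨t, ht, hjt⟩ := hif j hj
      exact ⟨d0 + t, by omega, by omega, by rw [hjt, (St t ht).2]⟩
    · intro c hc1 hc2
      obtain ⟨j, hj, hjt⟩ := hib (c - d0) (by omega)
      refine ⟨j, hj, ?_⟩
      rw [hjt, (St (c - d0) (by omega)).2]
      congr 2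
      omega
  choose d hd1 hd2 hd3 using main
  exact ⟨s, d, hd1, hd2, hd3⟩


-- ### interval characterisation of the fibers of T

section Int
variable {n k : ℕ} {σ : Fin (k + 1) → ZMod (n + k)} {s : ZMod (n + k)} {d : Fin (k + 1) → ℕ}

lemma b_decomp (hn : 3 ≤ n) (s : ZMod (n + k)) (e : ℕ) (b : ZMod (n + k)) :
    b = s + ((e + (b - (s + (e : ZMod (n + k)))).val : ℕ) : ZMod (n + k)) := by
  conv_lhs => rw [eq_add_val hn (s + (e : ZMod (n + k))) b]
  rw [add_add_cast]

lemma int_mpr (hn : 3 ≤ n)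
    (hfwd : ∀ i : Fin (k + 1), ∀ j, j ≤ i →
      ∃ c, d i ≤ c ∧ c ≤ d i + i.val ∧ σ j = s + (c : ZMod (n + k)))
    (i : Fin (k + 1)) (b : ZMod (n + k))
    (hm : (b - (s + ((d i + i.val : ℕ) : ZMod (n + k)))).val ≤ k - i.val) :
    ∀ j, j ≤ i → Incomp n k (σ j) b := by
  intro j hj
  have hik := i.isLt
  obtain ⟨c, hc1, hc2, hc3⟩ := hfwd i j hj
  set m := (b - (s + ((d i + i.val : ℕ) : ZMod (n + k)))).val with hmdef
  have hb : b = s + ((d i + i.val + m : ℕ) : ZMod (n + k)) := b_decomp hn s (d i + i.val) b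
  show (b - σ j).val ≤ k
  rw [hb, hc3, key_val hn s (by omega) (by omega)]
  omega

lemma int_mp (hn : 3 ≤ n)
    (hbwd : ∀ i : Fin (k + 1), ∀ c, d i ≤ c → c ≤ d i + i.val →
      ∃ j, j ≤ i ∧ σ j = s + (c : ZMod (n + k)))
    (i : Fin (k + 1)) (b : ZMod (n + k))
    (h : ∀ j, j ≤ i → Incomp n k (σ j) b) :
    (b - (s + ((d i + i.val : ℕ) : ZMod (n + k)))).val ≤ k - i.val := by
  by_contra hcon
  push_neg at hcon
  have hik := i.isLt
  have hn' : 3 ≤ n := hn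
  set m := (b - (s + ((d i + i.val : ℕ) : ZMod (n + k)))).val with hmdef
  have hmlt : m < n + k := val_lt' hn _
  set c := min (m + i.val) (n + k - 1) with hcdef
  obtain ⟨j, hj, hjs⟩ := hbwd i (d i + (m + i.val - c)) (by omega) (by omega)
  have hb : b = s + ((d i + i.val + m : ℕ) : ZMod (n + k)) := b_decomp hn s (d i + i.val) b
  have hI := h j hj
  unfold Incomp at hI
  rw [hb, hjs, key_val hn s (by omega) (by omega)] at hI
  omega

end Int

-- ### the linear extension used for reversibility

open Classical in
/-- The largest index `m ≤ k` such that `b` is incomparable with `σ j` for all `j ≤ m`. -/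
noncomputable def Mb (n k : ℕ) (σ : Fin (k + 1) → ZMod (n + k)) (b : ZMod (n + k)) : ℕ :=
  Nat.findGreatest
    (fun m => ∃ h : m < k + 1, ∀ j, j ≤ (⟨m, h⟩ : Fin (k + 1)) → Incomp n k (σ j) b) k

open Classical in
/-- Level function of the linear extension. -/
noncomputable def levelF (n k : ℕ) (σ : Fin (k + 1) → ZMod (n + k)) :
    ZMod (n + k) ⊕ ZMod (n + k) → ℕ
  | Sum.inl a => if h : ∃ i, a = σ i then 2 + 2 * (k - h.choose.val) else 0
  | Sum.inr b => if Incomp n k (σ 0) b then 1 + 2 * (k - Mb n k σ b) else 2 * k + 3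

/-- The linear extension itself. -/
noncomputable def revF (n k : ℕ) (σ : Fin (k + 1) → ZMod (n + k))
    (x : ZMod (n + k) ⊕ ZMod (n + k)) : ℕ :=
  (n + k) * levelF n k σ x + Sum.elim ZMod.val ZMod.val x

section Rev
variable {n k : ℕ} {σ : Fin (k + 1) → ZMod (n + k)}

lemma elim_val_lt (hn : 3 ≤ n) (x : ZMod (n + k) ⊕ ZMod (n + k)) :
    Sum.elim ZMod.val ZMod.val x < n + k := by
  cases x <;> exact val_lt' hn _

lemma revF_lt (hn : 3 ≤ n) {x y : ZMod (n + k) ⊕ ZMod (n + k)}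
    (h : levelF n k σ x < levelF n k σ y) : revF n k σ x < revF n k σ y := by
  unfold revF
  have hx := elim_val_lt hn x
  have h1 : (n + k) * (levelF n k σ x + 1) ≤ (n + k) * levelF n k σ y :=
    Nat.mul_le_mul_left _ h
  have h2 : (n + k) * (levelF n k σ x + 1) = (n + k) * levelF n k σ x + (n + k) := by ring
  omega

lemma levelF_inl_even (a : ZMod (n + k)) : levelF n k σ (Sum.inl a) % 2 = 0 := by
  show (if h : ∃ i, a = σ i then 2 + 2 * (k - h.choose.val) else 0) % 2 = 0
  split_ifs <;> omega

lemma levelF_inr_odd (b : ZMod (n + k)) : levelF n k σ (Sum.inr b) % 2 = 1 := by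
  classical
  show (if Incomp n k (σ 0) b then 1 + 2 * (k - Mb n k σ b) else 2 * k + 3) % 2 = 1
  split_ifs <;> omega

lemma revF_inj (hn : 3 ≤ n) : Function.Injective (revF n k σ) := by
  intro x y hxy
  have hx := elim_val_lt hn x
  have hy := elim_val_lt hn y
  have hlev : levelF n k σ x = levelF n k σ y := by
    have h0 := congrArg (· / (n + k)) hxy
    unfold revF at h0
    rwa [Nat.mul_add_div (by omega), Nat.mul_add_div (by omega),
      Nat.div_eq_of_lt hx, Nat.div_eq_of_lt hy, add_zero, add_zero] at h0
  have hval : Sum.elim ZMod.val ZMod.val x = Sum.elim ZMod.val ZMod.val y := by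
    unfold revF at hxy
    rw [hlev] at hxy
    omega
  have vinj : ∀ u v : ZMod (n + k), u.val = v.val → u = v := by
    intro u v huv
    have := congrArg (Nat.cast : ℕ → ZMod (n + k)) huv
    rwa [val_cast_back hn, val_cast_back hn] at this
  cases x with
  | inl a =>
    cases y with
    | inl a' => simp only [Sum.elim_inl] at hval; rw [vinj _ _ hval]
    | inr b =>
      have h1 := levelF_inl_even (σ := σ) a
      have h2 := levelF_inr_odd (σ := σ) b
      rw [hlev] at h1
      omega
  | inr b =>
    cases y with
    | inl a' =>
      have h1 := levelF_inr_odd (σ := σ) b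
      have h2 := levelF_inl_even (σ := σ) a'
      rw [hlev] at h1
      omega
    | inr b' => simp only [Sum.elim_inr] at hval; rw [vinj _ _ hval]

end Rev


section Mb
variable {n k : ℕ} {σ : Fin (k + 1) → ZMod (n + k)}

lemma Mb_le (b : ZMod (n + k)) : Mb n k σ b ≤ k := by
  classical
  unfold Mb; exact Nat.findGreatest_le k

lemma le_Mb {b : ZMod (n + k)} {i : Fin (k + 1)}
    (h : ∀ j, j ≤ i → Incomp n k (σ j) b) : i.val ≤ Mb n k σ b := by
  classical
  unfold Mb
  exact Nat.le_findGreatest (Nat.lt_succ_iff.mp i.isLt)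
    ⟨i.isLt, fun j hj => h j (by simpa using hj)⟩

lemma Mb_spec {b : ZMod (n + k)} (h0 : Incomp n k (σ 0) b) {i : Fin (k + 1)}
    (hi : i.val ≤ Mb n k σ b) : Incomp n k (σ i) b := by
  classical
  unfold Mb at hi
  have hP0 : ∃ hh : (0:ℕ) < k + 1,
      ∀ j, j ≤ (⟨0, hh⟩ : Fin (k + 1)) → Incomp n k (σ j) b := by
    refine ⟨by omega, ?_⟩
    intro j hj
    have hv : j.val ≤ 0 := by simpa using Fin.le_def.mp hj
    have hj0 : j = 0 := by
      apply Fin.ext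
      simpa using hv
    rw [hj0]; exact h0
  have hPM := Nat.findGreatest_spec (P := fun m => ∃ hh : m < k + 1,
    ∀ j, j ≤ (⟨m, hh⟩ : Fin (k + 1)) → Incomp n k (σ j) b) (Nat.zero_le k) hP0
  obtain ⟨hlt, hall⟩ := hPM
  exact hall i (by rw [Fin.le_def]; simpa using hi)

end Mb

/-- for an `h`-contiguous sequence `σ` of length `k+1`, the canonical set
`T(σ)` is reversible, is a maximal independent set in `G_n^k`, and has exactly
`(k+1)(k+2)/2` elements. -/
theorem Tset_reversible_maxIndep_card (n k : ℕ) (hn : 3 ≤ n)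
    (σ : Fin (k + 1) → ZMod (n + k)) (hσ : HContiguous n k σ) :
    Reversible n k (Tset n k σ) ∧
    Indep n k (Tset n k σ) ∧
    (∀ S : Set (Pair n k), Tset n k σ ⊆ S → Indep n k S → S = Tset n k σ) ∧
    (Tset n k σ).ncard = (k + 1) * (k + 2) / 2 := by
  classical
  haveI : NeZero (n + k) := ⟨by omega⟩
  obtain ⟨s, d, hd1, hfwd, hbwd⟩ := struct hn σ hσ
  -- ## Reversibility
  have hRev : Reversible n k (Tset n k σ) := by
    refine ⟨revF n k σ, revF_inj hn, ?_, ?_⟩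
    · intro a b hab
      apply revF_lt hn
      show (if h : ∃ i, a = σ i then 2 + 2 * (k - h.choose.val) else 0)
          < (if Incomp n k (σ 0) b then 1 + 2 * (k - Mb n k σ b) else 2 * k + 3)
      by_cases h : ∃ i, a = σ i
      · rw [dif_pos h]
        have hspec : a = σ h.choose := h.choose_spec
        have hik := h.choose.isLt
        by_cases h0 : Incomp n k (σ 0) b
        · rw [if_pos h0]
          have hM : Mb n k σ b < h.choose.val := by
            by_contra hM
            push_neg at hM
            have hic : Incomp n k (σ h.choose) b := Mb_spec h0 hM
            rw [← hspec] at hic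
            unfold Incomp at hic
            unfold CompLt at hab
            omega
          have hMk : Mb n k σ b ≤ k := Mb_le b
          omega
        · rw [if_neg h0]
          omega
      · rw [dif_neg h]
        split_ifs <;> omega
    · rintro ⟨a, b⟩ ⟨i, h1, h2⟩
      apply revF_lt hn
      show (if Incomp n k (σ 0) b then 1 + 2 * (k - Mb n k σ b) else 2 * k + 3)
          < (if h : ∃ i', a = σ i' then 2 + 2 * (k - h.choose.val) else 0)
      have hex : ∃ i', a = σ i' := ⟨i, h1⟩
      rw [dif_pos hex]
      have hch : hex.choose = i := hσ.1 (hex.choose_spec.symm.trans h1)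
      have h0 : Incomp n k (σ 0) b := h2 0 (Fin.zero_le i)
      rw [if_pos h0, hch]
      have hMi : i.val ≤ Mb n k σ b := le_Mb h2
      have hMk : Mb n k σ b ≤ k := Mb_le b
      have hik := i.isLt
      omega
  -- ## Independence
  have hInd : Indep n k (Tset n k σ) := by
    constructor
    · rintro ⟨a, b⟩ ⟨i, h1, h2⟩
      show Incomp n k a b
      rw [show a = σ i from h1]
      exact h2 i le_rfl
    · rintro ⟨a, b⟩ ⟨i, h1, h2⟩ ⟨a', b'⟩ ⟨i', h1', h2'⟩ ⟨hadj1, hadj2⟩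
      rcases le_total i i' with h | h
      · have hic : (b' - σ i).val ≤ k := h2' i h
        have hc : CompLt n k (σ i) b' := by
          rw [← show a = σ i from h1]; exact hadj1
        unfold CompLt at hc
        omega
      · have hic : (b - σ i').val ≤ k := h2 i' h
        have hc : CompLt n k (σ i') b := by
          rw [← show a' = σ i' from h1']; exact hadj2
        unfold CompLt at hc
        omega
  -- ## Maximality
  have hMax : ∀ S : Set (Pair n k), Tset n k σ ⊆ S → Indep n k S → S = Tset n k σ := by
    intro S hTS hS
    refine Set.Subset.antisymm ?_ hTS
    rintro ⟨a, b⟩ hpS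
    obtain ⟨hSinc, hSadj⟩ := hS
    have hpinc : Incomp n k a b := hSinc _ hpS
    by_contra hpT
    have hnotT := hpT
    simp only [Tset, Set.mem_setOf_eq] at hnotT
    push_neg at hnotT
    -- Step 1 : b is incomparable with every σ i
    have hB : ∀ i : Fin (k + 1), Incomp n k (σ i) b := by
      by_contra hcon
      push_neg at hcon
      obtain ⟨i₀', hi₀'⟩ := hcon
      have hQ : ∃ m, ∃ hh : m < k + 1, ¬ Incomp n k (σ ⟨m, hh⟩) b :=
        ⟨i₀'.val, i₀'.isLt, by rwa [Fin.eta]⟩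
      obtain ⟨hm₀lt, hm₀⟩ := Nat.find_spec hQ
      set i₀ : Fin (k + 1) := ⟨Nat.find hQ, hm₀lt⟩ with hi₀def
      have hi₀v : i₀.val = Nat.find hQ := by rw [hi₀def]
      have hi₀k := i₀.isLt
      set ρ := s + ((d i₀ + i₀.val : ℕ) : ZMod (n + k)) with hρdef
      have hCi₀ : CompLt n k (σ i₀) b := by
        unfold Incomp at hm₀
        unfold CompLt
        omega
      have hqT : ∀ m : ℕ, m ≤ k - i₀.val →
          (σ i₀, ρ + (m : ZMod (n + k))) ∈ Tset n k σ := by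
        intro m hm
        have hmarg : ((ρ + (m : ZMod (n + k)))
            - (s + ((d i₀ + i₀.val : ℕ) : ZMod (n + k)))).val ≤ k - i₀.val := by
          rw [hρdef, add_add_cast s (d i₀ + i₀.val) m,
            key_val hn s (by omega) (by omega)]
          omega
        exact ⟨i₀, rfl, fun j hj =>
          int_mpr hn hfwd i₀ (ρ + (m : ZMod (n + k))) hmarg j hj⟩
      have hdag : ∀ m : ℕ, m ≤ k - i₀.val →
          ((ρ + (m : ZMod (n + k))) - a).val ≤ k := by
        intro m hm
        have hnadj := hSadj _ hpS _ (hTS (hqT m hm))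
        by_contra hc
        push_neg at hc
        exact hnadj ⟨hc, hCi₀⟩
      set w := (ρ - a).val with hwdef
      have hwlt : w < n + k := val_lt' hn _
      have hw : w ≤ i₀.val := by
        by_contra hw'
        push_neg at hw'
        set c := min (w + (k - i₀.val)) (n + k - 1) with hcdef
        have hm : c - w ≤ k - i₀.val := by omega
        have h1 := hdag (c - w) hm
        rw [sub_add_val hn a ρ (c - w), ← hwdef] at h1
        have hcw : w + (c - w) = c := by omega
        rw [hcw, Nat.mod_eq_of_lt (by omega)] at h1
        omega
      have h1 : ρ = a + ((w : ℕ) : ZMod (n + k)) := by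
        rw [hwdef]; exact eq_add_val hn a ρ
      have h2 : ((d i₀ + i₀.val : ℕ) : ZMod (n + k))
          = ((d i₀ + i₀.val - w : ℕ) : ZMod (n + k)) + ((w : ℕ) : ZMod (n + k)) := by
        rw [← Nat.cast_add]; congr 1; omega
      have ha : a = s + ((d i₀ + i₀.val - w : ℕ) : ZMod (n + k)) := by
        have h3 : a = ρ - ((w : ℕ) : ZMod (n + k)) := by rw [h1]; ring
        rw [h3, hρdef, h2]; ring
      obtain ⟨j, hj, hja⟩ := hbwd i₀ (d i₀ + i₀.val - w) (by omega) (by omega)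
      obtain ⟨j', hj'le, hj'⟩ := hnotT j (ha.trans hja.symm)
      have hfind : Nat.find hQ ≤ j'.val := Nat.find_le ⟨j'.isLt, by rwa [Fin.eta]⟩
      have hjv : j.val ≤ i₀.val := Fin.le_def.mp hj
      have hj'v : j'.val ≤ j.val := Fin.le_def.mp hj'le
      have hjeq : j = i₀ := Fin.ext (by omega)
      have hj'eq : j' = i₀ := Fin.ext (by omega)
      have haσ : a = σ i₀ := by rw [← hjeq]; exact ha.trans hja.symm
      rw [haσ] at hpinc
      rw [hj'eq] at hj'
      exact hj' hpinc
    -- Step 2 : then (a, b) must be the element of T, contradiction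
    have hlast := int_mp hn hbwd (Fin.last k) b (fun j _ => hB j)
    have hlastv : (Fin.last k).val = k := Fin.val_last k
    have hdlast : d (Fin.last k) = 0 := by
      have := hd1 (Fin.last k)
      omega
    have hval0 : (b - (s + ((d (Fin.last k) + (Fin.last k).val : ℕ)
        : ZMod (n + k)))).val = 0 := by omega
    have hb : b = s + ((d (Fin.last k) + (Fin.last k).val : ℕ) : ZMod (n + k)) := by
      have hh := eq_add_val hn
        (s + ((d (Fin.last k) + (Fin.last k).val : ℕ) : ZMod (n + k))) b
      rw [hval0] at hh
      simpa using hh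
    set β := (b - a).val with hβdef
    have hβ : β ≤ k := hpinc
    have ha2 : a = s + ((k - β : ℕ) : ZMod (n + k)) := by
      have hh1 : b = a + ((β : ℕ) : ZMod (n + k)) := by
        rw [hβdef]; exact eq_add_val hn a b
      have hh2 : b = s + ((k : ℕ) : ZMod (n + k)) := by
        rw [hb, hdlast, hlastv]; norm_num
      have hh3 : ((k : ℕ) : ZMod (n + k))
          = ((k - β : ℕ) : ZMod (n + k)) + ((β : ℕ) : ZMod (n + k)) := by
        rw [← Nat.cast_add]; congr 1; omega
      have hh4 : a = b - ((β : ℕ) : ZMod (n + k)) := by rw [hh1]; ring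
      rw [hh4, hh2, hh3]; ring
    obtain ⟨j, hj, hja⟩ := hbwd (Fin.last k) (k - β) (by omega) (by omega)
    exact hpT ⟨j, ha2.trans hja.symm, fun j' _ => hB j'⟩
  -- ## Cardinality
  have hCard : (Tset n k σ).ncard = (k + 1) * (k + 2) / 2 := by
    have hFinj : Function.Injective (fun x : Σ i : Fin (k + 1), Fin (k + 1 - i.val) =>
        ((σ x.1, s + ((d x.1 + x.1.val + x.2.val : ℕ) : ZMod (n + k))) : Pair n k)) := by
      rintro ⟨i, m⟩ ⟨i', m'⟩ h
      simp only [Prod.mk.injEq] at h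
      obtain ⟨h1, h2⟩ := h
      have hii : i = i' := hσ.1 h1
      subst hii
      have h3 : ((d i + i.val + m.val : ℕ) : ZMod (n + k))
          = ((d i + i.val + m'.val : ℕ) : ZMod (n + k)) := add_left_cancel h2
      push_cast at h3
      have h4 : ((m.val : ℕ) : ZMod (n + k)) = ((m'.val : ℕ) : ZMod (n + k)) :=
        add_left_cancel h3
      have hmlt := m.isLt
      have hmlt' := m'.isLt
      have hilt := i.isLt
      have h5 : m.val = m'.val := cast_inj hn (by omega) (by omega) h4
      have hmm : m = m' := Fin.ext h5
      rw [hmm]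
    have hTeq : Tset n k σ =
        ↑(Finset.image (fun x : Σ i : Fin (k + 1), Fin (k + 1 - i.val) =>
            ((σ x.1, s + ((d x.1 + x.1.val + x.2.val : ℕ) : ZMod (n + k))) : Pair n k))
          Finset.univ) := by
      ext p
      simp only [Finset.coe_image, Finset.coe_univ, Set.image_univ, Set.mem_range]
      constructor
      · rintro ⟨i, h1, h2⟩
        have hm := int_mp hn hbwd i p.2 h2
        have hikk := i.isLt
        refine ⟨⟨i, ⟨(p.2 - (s + ((d i + i.val : ℕ) : ZMod (n + k)))).val, by omega⟩⟩, ?_⟩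
        have  hp2 : s + ((d i + i.val + (p.2 - (s + ((d i + i.val : ℕ) : ZMod (n + k)))).val : ℕ)
            : ZMod (n + k)) = p.2 := (b_decomp hn s (d i + i.val) p.2).symm
        exact Prod.ext h1.symm hp2
      · rintro ⟨⟨i, m⟩, rfl⟩
        refine ⟨i, rfl, ?_⟩
        have hmlt := m.isLt
        have hilt := i.isLt
        have hmarg : ((s + ((d i + i.val + m.val : ℕ) : ZMod (n + k)))
            - (s + ((d i + i.val : ℕ) : ZMod (n + k)))).val ≤ k - i.val := by
          rw [key_val hn s (by omega) (by omega)]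
          omega
        exact fun j hj => int_mpr hn hfwd i _ hmarg j hj
    rw [hTeq, Set.ncard_coe_finset,
      Finset.card_image_of_injective _ hFinj, Finset.card_univ, Fintype.card_sigma]
    simp only [Fintype.card_fin]
    rw [Fin.sum_univ_eq_sum_range (fun i => k + 1 - i) (k + 1)]
    have hcg : ∀ x ∈ Finset.range (k + 1),
        k + 1 - x = (fun j => j + 1) ((k + 1) - 1 - x) := by
      intro x hx
      simp only [Finset.mem_range] at hx
      simp only
      omega
    rw [Finset.sum_congr rfl hcg, Finset.sum_range_reflect (fun j => j + 1) (k + 1)]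
    have h2 : ∑ j ∈ Finset.range (k + 1), (j + 1) = ∑ j ∈ Finset.range (k + 2), j := by
      rw [Finset.sum_range_succ' (fun j => j) (k + 1)]
      simp
    have h3 := Finset.sum_range_id_mul_two (k + 2)
    have h4 : (k + 1) * (k + 2) = (∑ j ∈ Finset.range (k + 2), j) * 2 := by
      rw [h3, show k + 2 - 1 = k + 1 from rfl]; ring
    rw [h2, h4, Nat.mul_div_cancel _ (by norm_num)]
  exact ⟨hRev, hInd, hMax, hCard⟩
end CrownPaper
end

section
/- Let n ≥ 3 and k ≥ 0. If R is a maximal reversible set of critical pairs of the crown S_n^k, then R is a maximal independent set in the graph G_n^k. -/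
namespace CrownPaper

/-- The disjoint union on which linear extensions live. -/
abbrev Vert (n k : ℕ) := (ZMod (n + k)) ⊕ (ZMod (n + k))

/-- The unified constraint relation: all comparabilities of the crown together with the
reversals demanded by `R`. -/
def Rel (n k : ℕ) (R : Set (Pair n k)) (x y : Vert n k) : Prop :=
  (∃ i j, CompLt n k i j ∧ x = Sum.inl i ∧ y = Sum.inr j) ∨
  (∃ q ∈ R, x = Sum.inr q.2 ∧ y = Sum.inl q.1)

lemma swap_eval {n k : ℕ} (f : Vert n k → ℕ) (c₁ c₂ x : Vert n k) :
    (f ∘ Equiv.swap c₁ c₂) x = if x = c₁ then f c₂ else if x = c₂ then f c₁ else f x := by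
  simp only [Function.comp_apply, Equiv.swap_apply_def]
  split_ifs <;> rfl

/-- If two values of a witness `f` can be exchanged without breaking any constraint,
the result is again order-preserving for all constraints. -/
lemma swap_wit {n k : ℕ} {R : Set (Pair n k)} (f : Vert n k → ℕ)
    (hf : ∀ x y, Rel n k R x y → f x < f y)
    (c₁ c₂ : Vert n k) (h12 : f c₁ < f c₂)
    (h12n : ¬ Rel n k R c₁ c₂)
    (hup : ∀ y, Rel n k R c₁ y → y ≠ c₂ → f c₂ < f y)
    (hdown : ∀ x, Rel n k R x c₂ → x ≠ c₁ → f x < f c₁) :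
    ∀ x y, Rel n k R x y → (f ∘ Equiv.swap c₁ c₂) x < (f ∘ Equiv.swap c₁ c₂) y := by
  intro x y hr
  have hxy : x ≠ y := by
    intro h
    exact absurd (hf x y hr) (by rw [h]; exact lt_irrefl _)
  rw [swap_eval, swap_eval]
  by_cases hx1 : x = c₁
  · have hy1 : y ≠ c₁ := fun h => hxy (hx1.trans h.symm)
    rw [if_pos hx1]
    by_cases hy2 : y = c₂
    · exact absurd (hx1 ▸ hy2 ▸ hr) h12n
    · rw [if_neg hy1, if_neg hy2]
      exact hup y (hx1 ▸ hr) hy2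
  · by_cases hx2 : x = c₂
    · rw [if_neg hx1, if_pos hx2]
      by_cases hy1 : y = c₁
      · rw [if_pos hy1]; exact h12
      · have hy2 : y ≠ c₂ := fun h => hxy (hx2.trans h.symm)
        rw [if_neg hy1, if_neg hy2]
        exact lt_trans h12 (hx2 ▸ hf x y hr)
    · rw [if_neg hx1, if_neg hx2]
      by_cases hy1 : y = c₁
      · rw [if_pos hy1]
        exact lt_trans (hy1 ▸ hf x y hr) h12
      · by_cases hy2 : y = c₂
        · rw [if_neg hy1, if_pos hy2]
          exact hdown x (hy2 ▸ hr) hx1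
        · rw [if_neg hy1, if_neg hy2]
          exact hf x y hr

/-- a maximal reversible set of critical pairs of `S_n^k` is a maximal
independent set in `G_n^k`. -/
theorem maximal_reversible_is_maximal_independent (n k : ℕ) (hn : 3 ≤ n)
    (R : Set (Pair n k)) (hinc : ∀ p ∈ R, IsIncPair n k p)
    (hrev : Reversible n k R)
    (hmax : ∀ R' : Set (Pair n k), R ⊆ R' → (∀ p ∈ R', IsIncPair n k p) →
      Reversible n k R' → R' = R) :
    Indep n k R ∧ ∀ S : Set (Pair n k), R ⊆ S → Indep n k S → S = R := by
  haveI : NeZero (n + k) := ⟨by omega⟩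
  constructor
  · -- R is independent
    refine ⟨hinc, ?_⟩
    obtain ⟨f, hfinj, hfc, hfr⟩ := hrev
    rintro p hp q hq ⟨h1, h2⟩
    have e1 : f (Sum.inl p.1) < f (Sum.inr q.2) := hfc _ _ h1
    have e2 : f (Sum.inr q.2) < f (Sum.inl q.1) := hfr q hq
    have e3 : f (Sum.inl q.1) < f (Sum.inr p.2) := hfc _ _ h2
    have e4 : f (Sum.inr p.2) < f (Sum.inl p.1) := hfr p hp
    omega
  · -- maximal independence
    intro S hRS hS
    refine Set.Subset.antisymm ?_ hRS
    intro p hp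
    by_contra hpR
    -- p is incomparable
    have hpinc : Incomp n k p.1 p.2 := hS.1 p hp
    -- any incomparable pair reversed by some witness of R belongs to R
    have haddR : ∀ q : Pair n k, Incomp n k q.1 q.2 →
        ∀ g : Vert n k → ℕ, Function.Injective g → (∀ x y, Rel n k R x y → g x < g y) →
        g (Sum.inr q.2) < g (Sum.inl q.1) → q ∈ R := by
      intro q hq g hginj hgrel hgq
      have hrev' : Reversible n k (insert q R) := by
        refine ⟨g, hginj, fun i j h => hgrel _ _ (Or.inl ⟨i, j, h, rfl, rfl⟩), ?_⟩
        intro r hr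
        rcases Set.mem_insert_iff.mp hr with h | h
        · rw [h]; exact hgq
        · exact hgrel _ _ (Or.inr ⟨r, h, rfl, rfl⟩)
      have hinc' : ∀ r ∈ insert q R, IsIncPair n k r := by
        intro r hr
        rcases Set.mem_insert_iff.mp hr with h | h
        · rw [h]; exact hq
        · exact hinc r h
      have := hmax (insert q R) (Set.subset_insert _ _) hinc' hrev'
      rw [← this]; exact Set.mem_insert _ _
    -- the set of possible "interval sizes" over witnesses of R
    set W : Set ℕ := {m | ∃ g : Vert n k → ℕ, (Function.Injective g ∧
        ∀ x y, Rel n k R x y → g x < g y) ∧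
        {x | g (Sum.inl p.1) < g x ∧ g x < g (Sum.inr p.2)}.ncard = m} with hW
    have hWne : W.Nonempty := by
      obtain ⟨f, hfinj, hfc, hfr⟩ := hrev
      refine ⟨_, f, ⟨hfinj, ?_⟩, rfl⟩
      rintro x y (⟨i, j, h, rfl, rfl⟩ | ⟨q, hq, rfl, rfl⟩)
      · exact hfc _ _ h
      · exact hfr q hq
    obtain ⟨f, ⟨hinj, hf⟩, hμ⟩ := Nat.sInf_mem hWne
    -- p is not reversed by f (else p ∈ R)
    have hαβ : f (Sum.inl p.1) < f (Sum.inr p.2) := by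
      have hne : f (Sum.inl p.1) ≠ f (Sum.inr p.2) := fun h => by
        exact absurd (hinj h) (by simp)
      rcases lt_or_gt_of_ne hne with h | h
      · exact h
      · exact absurd (haddR p hpinc f hinj hf h) hpR
    set I : Set (Vert n k) := {x | f (Sum.inl p.1) < f x ∧ f x < f (Sum.inr p.2)} with hI
    -- any witness with a strictly smaller interval contradicts minimality
    have smaller : ∀ g : Vert n k → ℕ, Function.Injective g →
        (∀ x y, Rel n k R x y → g x < g y) →
        {x | g (Sum.inl p.1) < g x ∧ g x < g (Sum.inr p.2)} ⊂ I → False := by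
      intro g hginj hgrel hss
      have h1 : {x | g (Sum.inl p.1) < g x ∧ g x < g (Sum.inr p.2)}.ncard ∈ W :=
        ⟨g, ⟨hginj, hgrel⟩, rfl⟩
      have h2 : {x | g (Sum.inl p.1) < g x ∧ g x < g (Sum.inr p.2)}.ncard < I.ncard :=
        Set.ncard_lt_ncard hss (Set.toFinite I)
      have := Nat.sInf_le h1
      omega
    by_cases hIne : I.Nonempty
    · -- main case: interval nonempty
      obtain ⟨c, hcI, hcmin⟩ := Set.exists_min_image I f (Set.toFinite I) hIne
      obtain ⟨c', hc'I, hc'max⟩ := Set.exists_max_image I f (Set.toFinite I) hIne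
      -- generic step: swapping the least interval element with a_{p.1} must break a constraint
      have stepA : ∀ c₂ : Vert n k, c₂ ∈ I → (∀ x ∈ I, f c₂ ≤ f x) →
          Rel n k R (Sum.inl p.1) c₂ := by
        intro c₂ hc₂ hmin
        by_contra h12n
        have hc₂ne : c₂ ≠ Sum.inr p.2 := fun h => lt_irrefl _ (h ▸ hc₂.2)
        have hc₂ne' : c₂ ≠ Sum.inl p.1 := fun h => lt_irrefl _ (h ▸ hc₂.1)
        refine smaller (f ∘ Equiv.swap (Sum.inl p.1) c₂)
          (hinj.comp (Equiv.swap _ _).injective)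
          (swap_wit f hf _ _ hc₂.1 h12n ?_ ?_) ?_
        · -- hup
          intro y hr hy2
          have h1 : f (Sum.inl p.1) < f y := hf _ _ hr
          by_cases h2 : f y < f (Sum.inr p.2)
          · exact lt_of_le_of_ne (hmin y ⟨h1, h2⟩) (fun h => hy2 (hinj h).symm)
          · exact lt_of_lt_of_le hc₂.2 (not_lt.mp h2)
        · -- hdown
          intro x hr hx1
          have h1 : f x < f c₂ := hf _ _ hr
          by_cases h2 : f (Sum.inl p.1) < f x
          · exact absurd (hmin x ⟨h2, lt_trans h1 hc₂.2⟩) (not_le.mpr h1)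
          · exact lt_of_le_of_ne (not_lt.mp h2) (fun h => hx1 (hinj h))
        · -- strictly smaller interval
          have g1 : (f ∘ Equiv.swap (Sum.inl p.1) c₂) (Sum.inl p.1) = f c₂ := by
            rw [swap_eval, if_pos rfl]
          have g2 : (f ∘ Equiv.swap (Sum.inl p.1) c₂) (Sum.inr p.2) = f (Sum.inr p.2) := by
            rw [swap_eval, if_neg (by simp), if_neg (Ne.symm hc₂ne)]
          have hsub : {x | (f ∘ Equiv.swap (Sum.inl p.1) c₂) (Sum.inl p.1) <
              (f ∘ Equiv.swap (Sum.inl p.1) c₂) x ∧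
              (f ∘ Equiv.swap (Sum.inl p.1) c₂) x <
              (f ∘ Equiv.swap (Sum.inl p.1) c₂) (Sum.inr p.2)} ⊆ I := by
            intro x hx
            obtain ⟨hx1, hx2⟩ := hx
            rw [g1] at hx1
            rw [g2] at hx2
            rw [swap_eval] at hx1 hx2
            by_cases e1 : x = Sum.inl p.1
            · rw [if_pos e1] at hx1; exact absurd hx1 (lt_irrefl _)
            · by_cases e2 : x = c₂
              · rw [if_neg e1, if_pos e2] at hx1
                exact absurd (lt_trans hx1 hc₂.1) (lt_irrefl _)
              · rw [if_neg e1, if_neg e2] at hx1 hx2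
                exact ⟨lt_trans hc₂.1 hx1, hx2⟩
          refine (Set.ssubset_iff_of_subset hsub).mpr ⟨c₂, hc₂, ?_⟩
          intro hmem
          obtain ⟨hx1, _⟩ := hmem
          rw [g1, swap_eval, if_neg hc₂ne', if_pos rfl] at hx1
          exact absurd (lt_trans hx1 hc₂.1) (lt_irrefl _)
      have stepB : ∀ c₁ : Vert n k, c₁ ∈ I → (∀ x ∈ I, f x ≤ f c₁) →
          Rel n k R c₁ (Sum.inr p.2) := by
        intro c₁ hc₁ hmaxel
        by_contra h12n
        have hc₁ne : c₁ ≠ Sum.inr p.2 := fun h => lt_irrefl _ (h ▸ hc₁.2)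
        have hc₁ne' : c₁ ≠ Sum.inl p.1 := fun h => lt_irrefl _ (h ▸ hc₁.1)
        refine smaller (f ∘ Equiv.swap c₁ (Sum.inr p.2))
          (hinj.comp (Equiv.swap _ _).injective)
          (swap_wit f hf _ _ hc₁.2 h12n ?_ ?_) ?_
        · -- hup
          intro y hr hy2
          have h1 : f c₁ < f y := hf _ _ hr
          by_cases h2 : f y < f (Sum.inr p.2)
          · exact absurd (hmaxel y ⟨lt_trans hc₁.1 h1, h2⟩) (not_le.mpr h1)
          · exact lt_of_le_of_ne (not_lt.mp h2) (fun h => hy2 (hinj h.symm))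
        · -- hdown
          intro x hr hx1
          have h1 : f x < f (Sum.inr p.2) := hf _ _ hr
          by_cases h2 : f (Sum.inl p.1) < f x
          · exact lt_of_le_of_ne (hmaxel x ⟨h2, h1⟩) (fun h => hx1 (hinj h))
          · exact lt_of_le_of_lt (not_lt.mp h2) hc₁.1
        · -- strictly smaller interval
          have g1 : (f ∘ Equiv.swap c₁ (Sum.inr p.2)) (Sum.inl p.1) = f (Sum.inl p.1) := by
            rw [swap_eval, if_neg (Ne.symm hc₁ne'), if_neg (by simp)]
          have g2 : (f ∘ Equiv.swap c₁ (Sum.inr p.2)) (Sum.inr p.2) = f c₁ := by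
            rw [swap_eval, if_neg (Ne.symm hc₁ne), if_pos rfl]
          have hsub : {x | (f ∘ Equiv.swap c₁ (Sum.inr p.2)) (Sum.inl p.1) <
              (f ∘ Equiv.swap c₁ (Sum.inr p.2)) x ∧
              (f ∘ Equiv.swap c₁ (Sum.inr p.2)) x <
              (f ∘ Equiv.swap c₁ (Sum.inr p.2)) (Sum.inr p.2)} ⊆ I := by
            intro x hx
            obtain ⟨hx1, hx2⟩ := hx
            rw [g1] at hx1
            rw [g2] at hx2
            rw [swap_eval] at hx1 hx2
            by_cases e1 : x = c₁
            · rw [if_pos e1] at hx2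
              exact absurd (lt_trans hc₁.2 hx2) (lt_irrefl _)
            · by_cases e2 : x = Sum.inr p.2
              · rw [if_neg e1, if_pos e2] at hx2; exact absurd hx2 (lt_irrefl _)
              · rw [if_neg e1, if_neg e2] at hx1 hx2
                exact ⟨hx1, lt_trans hx2 hc₁.2⟩
          refine (Set.ssubset_iff_of_subset hsub).mpr ⟨c₁, hc₁, ?_⟩
          intro hmem
          obtain ⟨_, hx2⟩ := hmem
          rw [g2, swap_eval, if_pos rfl] at hx2
          exact absurd (lt_trans hc₁.2 hx2) (lt_irrefl _)
      -- analyze the least element: it must be some b_v with a_{p.1} < b_v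
      have hA := stepA c hcI hcmin
      obtain ⟨v, hcv, hv⟩ : ∃ v, c = Sum.inr v ∧ CompLt n k p.1 v := by
        rcases hA with ⟨i, j, hij, hi, hj⟩ | ⟨q, hq, hq1, hq2⟩
        · exact ⟨j, hj, by rw [Sum.inl.inj hi]; exact hij⟩
        · exact absurd hq1 (by simp)
      -- analyze the greatest element: it must be some a_u with a_u < b_{p.2}
      have hB := stepB c' hc'I hc'max
      obtain ⟨u, hc'u, hu⟩ : ∃ u, c' = Sum.inl u ∧ CompLt n k u p.2 := by
        rcases hB with ⟨i, j, hij, hi, hj⟩ | ⟨q, hq, hq1, hq2⟩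
        · exact ⟨i, hi, by rw [Sum.inr.inj hj]; exact hij⟩
        · exact absurd hq2 (by simp)
      -- f b_v < f a_u, hence (u,v) is incomparable and reversed by f, hence in R
      have hvu : f (Sum.inr v) < f (Sum.inl u) := by
        have := hc'max c hcI
        rw [hcv, hc'u] at this
        exact lt_of_le_of_ne this (fun h => by exact absurd (hinj h) (by simp))
      have huv : Incomp n k u v := by
        by_contra h
        have : CompLt n k u v := lt_of_not_ge h
        exact absurd (hf _ _ (Or.inl ⟨u, v, this, rfl, rfl⟩)) (not_lt.mpr (le_of_lt hvu))
      have hmem : (u, v) ∈ R := haddR (u, v) huv f hinj hf hvu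
      exact hS.2 p hp (u, v) (hRS hmem) ⟨hv, hu⟩
    · -- interval empty: swap a_{p.1} and b_{p.2} to reverse p, so p ∈ R
      have hIe : ∀ x : Vert n k, f (Sum.inl p.1) < f x → f x < f (Sum.inr p.2) → False :=
        fun x h1 h2 => hIne ⟨x, h1, h2⟩
      have h12n : ¬ Rel n k R (Sum.inl p.1) (Sum.inr p.2) := by
        rintro (⟨i, j, hij, hi, hj⟩ | ⟨q, hq, hq1, hq2⟩)
        · rw [← Sum.inl.inj hi, ← Sum.inr.inj hj] at hij
          exact absurd hij (not_lt.mpr hpinc)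
        · exact absurd hq1 (by simp)
      have hwit := swap_wit f hf (Sum.inl p.1) (Sum.inr p.2) hαβ h12n
        (by
          intro y hr hy2
          have h1 : f (Sum.inl p.1) < f y := hf _ _ hr
          by_cases h2 : f y < f (Sum.inr p.2)
          · exact absurd (hIe y h1 h2) (fun h => h)
          · exact lt_of_le_of_ne (not_lt.mp h2) (fun h => hy2 (hinj h.symm)))
        (by
          intro x hr hx1
          have h1 : f x < f (Sum.inr p.2) := hf _ _ hr
          by_cases h2 : f (Sum.inl p.1) < f x
          · exact absurd (hIe x h2 h1) (fun h => h)
          · exact lt_of_le_of_ne (not_lt.mp h2) (fun h => hx1 (hinj h)))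
      have hrevp : (f ∘ Equiv.swap (Sum.inl p.1) (Sum.inr p.2)) (Sum.inr p.2) <
          (f ∘ Equiv.swap (Sum.inl p.1) (Sum.inr p.2)) (Sum.inl p.1) := by
        rw [swap_eval, swap_eval, if_pos rfl, if_neg (by simp), if_pos rfl]
        exact hαβ
      exact hpR (haddR p hpinc _ (hinj.comp (Equiv.swap _ _).injective) hwit hrevp)

end CrownPaper
end

section
/- Let n ≥ 3, k ≥ 0, let R be a maximal reversible set of critical pairs of S_n^k, and let {x_1,...,x_{k+1}} be a consistent labeling of A(R) (so that α < β whenever B(x_β,R) ⊆ B(x_α,R)). Then for each i ∈ {1,...,k+1}, |B(x_i,R)| ≤ k + 2 - i. -/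
/-!
By maximality of `R`, every `b ∈ B(x_i)` is incomparable to each `x_α` with `α ≤ i`:
otherwise `x_α < b < x_i` in a linear extension reversing `R`, which forces
`B(x_α) ⊊ B(x_i)`, against the labeling. So `B(x_i)` lies in the `i + 1` cyclic windows
`[x_α, x_α + k]`. These windows share a point, hence one of them, `[m, m + k]`, contains
every `x_α`; it then contains the `i` points `x_α - 1` (`x_α ≠ m`), none of which lies in
the window of its own `x_α`, leaving at most `k + 1 - i` points for `B(x_i)`.
-/

namespace CrownPaper

section Window

variable {N : ℕ} [NeZero N]

/-- The cyclic interval `[a, a + k]` in `ZMod N`; in the crown, the maximal elements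
incomparable to the minimal element `a_a` are those with index in `window k a`. -/
def window (k : ℕ) (a : ZMod N) : Finset (ZMod N) :=
  Finset.univ.filter fun b => (b - a).val ≤ k

theorem mem_window {k : ℕ} {a b : ZMod N} : b ∈ window k a ↔ (b - a).val ≤ k := by
  simp [window]

theorem card_window {k : ℕ} (hk : k < N) (a : ZMod N) : (window k a).card = k + 1 := by
  rw [← Finset.card_range (k + 1)]
  refine Finset.card_nbij' (fun b => (b - a).val) (fun j => a + j) ?_ ?_ ?_ ?_
  · intro b hb
    simpa [Nat.lt_succ_iff, mem_window] using hb
  · intro j hj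
    have hj : j < k + 1 := by simpa using hj
    simp [mem_window, ZMod.val_cast_of_lt (by omega : j < N), Nat.lt_succ_iff.mp hj]
  · intro b _
    simp
  · intro j hj
    have hj : j < k + 1 := by simpa using hj
    simp [ZMod.val_cast_of_lt (by omega : j < N)]

theorem sub_one_notMem_window {k : ℕ} (hk : k + 1 < N) (a : ZMod N) :
    a - 1 ∉ window k a := by
  rw [mem_window, sub_sub_cancel_left, ZMod.neg_val', ZMod.val_one'' (by omega),
    Nat.mod_eq_of_lt (by omega)]
  omega

theorem sub_one_mem_window {k : ℕ} (hk : k + 1 < N) {a m : ZMod N} (ha : a ∈ window k m)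
    (ham : a ≠ m) : a - 1 ∈ window k m := by
  have hone : (1 : ZMod N).val = 1 := ZMod.val_one'' (by omega)
  have hpos : 1 ≤ (a - m).val := ZMod.val_pos.mpr (sub_ne_zero.mpr ham)
  rw [mem_window] at ha ⊢
  rw [sub_right_comm, ZMod.val_sub (by omega), hone]
  omega

/-- If the windows of all points of `P` share a point `y`, the point of `P` farthest
behind `y` has all of `P` in its window. -/
theorem exists_subset_window {k : ℕ} {P : Finset (ZMod N)} (hP : P.Nonempty) {y : ZMod N}
    (hy : ∀ a ∈ P, y ∈ window k a) : ∃ m ∈ P, P ⊆ window k m := by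
  obtain ⟨m, hm, hmax⟩ := P.exists_max_image (fun a => (y - a).val) hP
  refine ⟨m, hm, fun a ha => ?_⟩
  have hym := mem_window.mp (hy m hm)
  rw [mem_window, ← sub_sub_sub_cancel_left m a y, ZMod.val_sub (hmax a ha)]
  omega

theorem ncard_le_of_forall_mem_window {k : ℕ} (hk : k + 1 < N) {P : Finset (ZMod N)}
    (hP : P.Nonempty) {S : Set (ZMod N)} (hS : ∀ b ∈ S, ∀ a ∈ P, b ∈ window k a) :
    S.ncard ≤ k + 2 - P.card := by
  rcases S.eq_empty_or_nonempty with rfl | ⟨y, hy⟩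
  · simp
  obtain ⟨m, hm, hPm⟩ := exists_subset_window hP (hS y hy)
  set F := (P.erase m).image (· - 1)
  have hF : F ⊆ window k m := by
    simp only [F, Finset.image_subset_iff, Finset.mem_erase]
    exact fun a ⟨ham, ha⟩ => sub_one_mem_window hk (hPm ha) ham
  have hFcard : F.card = P.card - 1 := by
    rw [Finset.card_image_of_injective _ (sub_left_injective), Finset.card_erase_of_mem hm]
  have hSF : S ⊆ ↑(window k m \ F) := by
    intro b hb
    simp only [Finset.mem_coe, Finset.mem_sdiff, F, Finset.mem_image, Finset.mem_erase,
      not_exists, not_and]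
    exact ⟨hS b hb m hm, fun a ⟨_, ha⟩ hab => sub_one_notMem_window hk a (hab ▸ hS b hb a ha)⟩
  calc S.ncard ≤ (window k m \ F).card :=
        (Set.ncard_le_ncard hSF (Finset.finite_toSet _)).trans_eq (Set.ncard_coe_finset _)
    _ = k + 2 - P.card := by
        rw [Finset.card_sdiff_of_subset hF, card_window (by omega), hFcard]
        have := hP.card_pos
        omega

end Window

section MaximalReversible

variable {n k : ℕ} {R : Set (Pair n k)} {f : ZMod (n + k) ⊕ ZMod (n + k) → ℕ}

theorem mem_of_reversed (hinc : ∀ p ∈ R, IsIncPair n k p)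
    (hmax : ∀ R' : Set (Pair n k), R ⊆ R' → (∀ p ∈ R', IsIncPair n k p) →
      Reversible n k R' → R' = R)
    (hfinj : Function.Injective f)
    (hfmono : ∀ i j : ZMod (n + k), CompLt n k i j → f (Sum.inl i) < f (Sum.inr j))
    (hfrev : ∀ p ∈ R, f (Sum.inr p.2) < f (Sum.inl p.1))
    {a b : ZMod (n + k)} (hab : Incomp n k a b) (hlt : f (Sum.inr b) < f (Sum.inl a)) :
    (a, b) ∈ R := by
  have hins : insert (a, b) R = R := by
    refine hmax _ (Set.subset_insert _ _) ?_ ⟨f, hfinj, hfmono, ?_⟩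
    · rintro p (rfl | hp)
      exacts [hab, hinc p hp]
    · rintro p (rfl | hp)
      exacts [hlt, hfrev p hp]
  exact hins ▸ Set.mem_insert _ _

/-- If `a < b` for some `b ∈ B(a')`, then a linear extension reversing `R` puts
`B(a)` below `a` below `b` below `a'`, so maximality adds all of `B(a)` to `B(a')`. -/
theorem setOf_ssubset_of_compLt (hinc : ∀ p ∈ R, IsIncPair n k p)
    (hmax : ∀ R' : Set (Pair n k), R ⊆ R' → (∀ p ∈ R', IsIncPair n k p) →
      Reversible n k R' → R' = R)
    (hfinj : Function.Injective f)
    (hfmono : ∀ i j : ZMod (n + k), CompLt n k i j → f (Sum.inl i) < f (Sum.inr j))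
    (hfrev : ∀ p ∈ R, f (Sum.inr p.2) < f (Sum.inl p.1))
    {a a' b : ZMod (n + k)} (hb : (a', b) ∈ R) (hab : CompLt n k a b) :
    {b | (a, b) ∈ R} ⊂ {b | (a', b) ∈ R} := by
  have hfab : f (Sum.inl a) < f (Sum.inr b) := hfmono a b hab
  have hfba : f (Sum.inr b) < f (Sum.inl a') := hfrev _ hb
  refine ⟨fun b' hb' => ?_, fun hsub => ?_⟩
  · have hb'a : f (Sum.inr b') < f (Sum.inl a) := hfrev _ hb'
    have hinc' : Incomp n k a' b' := by
      by_contra hcomp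
      have := hfmono a' b' (Nat.lt_of_not_le hcomp)
      omega
    exact mem_of_reversed hinc hmax hfinj hfmono hfrev hinc' (by omega)
  · exact absurd (hinc _ (hsub hb)) (Nat.not_le_of_lt hab)

end MaximalReversible

/-- Here `i` is `0`-based, so the paper's bound `k + 2 - i` reads `k + 1 - i`. -/
theorem consistent_labeling_bound_general (n k : ℕ) (hn : 3 ≤ n) (R : Set (Pair n k))
    (hinc : ∀ p ∈ R, IsIncPair n k p) (hrev : Reversible n k R)
    (hmax : ∀ R' : Set (Pair n k), R ⊆ R' → (∀ p ∈ R', IsIncPair n k p) →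
      Reversible n k R' → R' = R)
    (x : Fin (k + 1) → ZMod (n + k)) (hxinj : Function.Injective x)
    (hcons : ∀ α β : Fin (k + 1),
      {b | (x β, b) ∈ R} ⊂ {b | (x α, b) ∈ R} → α < β) :
    ∀ i : Fin (k + 1), {b | (x i, b) ∈ R}.ncard ≤ k + 1 - (i : ℕ) := by
  intro i
  obtain ⟨f, hfinj, hfmono, hfrev⟩ := hrev
  have : NeZero (n + k) := ⟨by omega⟩
  have hwindow : ∀ b ∈ {b | (x i, b) ∈ R}, ∀ a ∈ (Finset.Iic i).image x, b ∈ window k a := by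
    simp only [Set.mem_ofPred_eq, Finset.mem_image, Finset.mem_Iic, forall_exists_index,
      and_imp]
    rintro b hb _ α hαi rfl
    refine mem_window.mpr (not_lt.mp fun hcomp => ?_)
    exact absurd hαi (not_le.mpr
      (hcons i α (setOf_ssubset_of_compLt hinc hmax hfinj hfmono hfrev hb hcomp)))
  have hcard : ((Finset.Iic i).image x).card = (i : ℕ) + 1 := by
    rw [Finset.card_image_of_injective _ hxinj, Fin.card_Iic]
  have := ncard_le_of_forall_mem_window (by omega) (Finset.nonempty_Iic.image x) hwindow
  omega

/-- for a maximal reversible set `R` with a consistent labeling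
`x_1, …, x_{k+1}` of `A(R)` (so `α < β` whenever `B(x_β,R) ⊊ B(x_α,R)`), one has
`|B(x_i,R)| ≤ k + 2 - i` (here `i` is `0`-based, so the bound reads `k + 1 - i`). -/
theorem consistent_labeling_bound (n k : ℕ) (hn : 3 ≤ n) (R : Set (Pair n k))
    (hinc : ∀ p ∈ R, IsIncPair n k p) (hrev : Reversible n k R)
    (hmax : ∀ R' : Set (Pair n k), R ⊆ R' → (∀ p ∈ R', IsIncPair n k p) →
      Reversible n k R' → R' = R)
    (x : Fin (k + 1) → ZMod (n + k)) (hxinj : Function.Injective x)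
    (hrange : Set.range x = {a | ∃ b, (a, b) ∈ R})
    (hcons : ∀ α β : Fin (k + 1),
      {b | (x β, b) ∈ R} ⊂ {b | (x α, b) ∈ R} → α < β) :
    ∀ i : Fin (k + 1), {b | (x i, b) ∈ R}.ncard ≤ k + 1 - (i : ℕ) :=
  consistent_labeling_bound_general n k hn R hinc hrev hmax x hxinj hcons

end CrownPaper
end

section
/- Let n ≥ 3, k < n ≤ 2k, and let t ≥ 1 be an integer. There exists an alternating cycle C_0 = {(x_α,y_α) : 1 ≤ α ≤ 2t+1} of incomparable pairs in the crown S_n^k satisfying the Matching Conditions if and only if t(n−k) ≤ k. -/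
namespace CrownPaper

set_option linter.unusedSectionVars false

lemma sub_val_eq {m : ℕ} [NeZero m] (u v : ZMod m) :
    (u - v).val = (u.val + (m - v.val)) % m := by
  have hv : v.val ≤ m := (ZMod.val_lt v).le
  have key : u - v = ((u.val + (m - v.val) : ℕ) : ZMod m) := by
    push_cast [Nat.cast_sub hv, ZMod.natCast_val, ZMod.natCast_self, ZMod.cast_id]
    ring
  rw [key, ZMod.val_natCast]

lemma sub_val_of_le {m : ℕ} [NeZero m] {u v : ZMod m} (h : v.val ≤ u.val) :
    (u - v).val = u.val - v.val := by
  have hu := ZMod.val_lt u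
  have hv := ZMod.val_lt v
  rw [sub_val_eq, show u.val + (m - v.val) = (u.val - v.val) + m by omega,
    Nat.add_mod_right, Nat.mod_eq_of_lt (by omega)]

lemma sub_val_of_lt {m : ℕ} [NeZero m] {u v : ZMod m} (h : u.val < v.val) :
    (u - v).val = u.val + m - v.val := by
  have hu := ZMod.val_lt u
  have hv := ZMod.val_lt v
  rw [sub_val_eq, show u.val + (m - v.val) = u.val + m - v.val by omega,
    Nat.mod_eq_of_lt (by omega)]

/-- position of `x_a` -/
def Pf (t d n a : ℕ) : ℕ := if a ≤ t then a * d else (a - (t+1)) * d + n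
/-- position of `y_a` -/
def Qf (t d k a : ℕ) : ℕ := if a < t then a * d else (a - t) * d + k

lemma Pf_le {t a : ℕ} (d n : ℕ) (h : a ≤ t) : Pf t d n a = a * d := if_pos h
lemma Pf_gt (t d n j : ℕ) : Pf t d n (t+1+j) = j * d + n := by
  have h1 : ¬ (t+1+j ≤ t) := by omega
  have h2 : t+1+j - (t+1) = j := by omega
  rw [Pf, if_neg h1, h2]
lemma Qf_lt {t a : ℕ} (d k : ℕ) (h : a < t) : Qf t d k a = a * d := if_pos h
lemma Qf_ge (t d k j : ℕ) : Qf t d k (t+j) = j * d + k := by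
  have h1 : ¬ (t+j < t) := by omega
  have h2 : t+j - t = j := by omega
  rw [Qf, if_neg h1, h2]

section Facts
variable {n k t d : ℕ} (hd : k + d = n) (hd1 : 1 ≤ d) (htd : t * d ≤ k) (hk1 : 1 ≤ k)

include hd hd1 htd hk1

lemma fact_Qle : ∀ a, a ≤ 2*t → Qf t d k a < n + k := by
  intro a ha
  rcases Nat.lt_or_ge a t with h | h
  · rw [Qf_lt d k h]
    have : a * d ≤ t * d := mul_le_mul_left (by omega) d
    omega
  · obtain ⟨j, rfl⟩ : ∃ j, a = t + j := ⟨a - t, by omega⟩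
    rw [Qf_ge]
    have : j * d ≤ t * d := mul_le_mul_left (by omega) d
    omega

lemma fact_Ple : ∀ a, a ≤ 2*t → Pf t d n a < n + k := by
  intro a ha
  rcases Nat.lt_or_ge t a with h | h
  · obtain ⟨j, rfl⟩ : ∃ j, a = t + 1 + j := ⟨a - (t+1), by omega⟩
    rw [Pf_gt]
    have e1 : (j+1) * d ≤ t * d := mul_le_mul_left (by omega) d
    have e2 : (j+1) * d = j * d + d := add_one_mul j d
    omega
  · rw [Pf_le d n h]
    have : a * d ≤ t * d := mul_le_mul_left h d
    omega

lemma fact_PQ : ∀ a, a ≤ 2*t → Pf t d n a ≤ Qf t d k a ∧ Qf t d k a ≤ Pf t d n a + k := by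
  intro a ha
  rcases Nat.lt_or_ge a t with h | h
  · rw [Pf_le d n h.le, Qf_lt d k h]; omega
  obtain ⟨j, rfl⟩ : ∃ j, a = t + j := ⟨a - t, by omega⟩
  rw [Qf_ge]
  rcases Nat.eq_zero_or_pos j with rfl | hj
  · simp only [Nat.add_zero]
    rw [Pf_le d n (le_refl t)]
    omega
  · obtain ⟨j', rfl⟩ : ∃ j', j = j' + 1 := ⟨j-1, by omega⟩
    rw [show t + (j'+1) = t+1+j' by omega, Pf_gt, add_one_mul]
    omega

lemma fact_QPsucc : ∀ a, a < 2*t → Qf t d k a < Pf t d n (a+1) := by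
  intro a ha
  rcases Nat.lt_or_ge a t with h | h
  · rw [Qf_lt d k h, Pf_le d n (by omega), add_one_mul]; omega
  · obtain ⟨j, rfl⟩ : ∃ j, a = t + j := ⟨a - t, by omega⟩
    rw [Qf_ge, show t+j+1 = t+1+j by omega, Pf_gt]
    omega

lemma fact_comp : ∀ a, 1 ≤ a → a ≤ 2*t → Pf t d n a < Qf t d k (a-1) + n := by
  intro a h1 h2
  rcases le_or_gt a t with h | h
  · rw [Pf_le d n h, Qf_lt d k (by omega)]
    have : (a-1) * d + d = a * d := by
      rw [← add_one_mul, show a - 1 + 1 = a by omega]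
    omega
  · obtain ⟨j, rfl⟩ : ∃ j, a = t + 1 + j := ⟨a - (t+1), by omega⟩
    rw [Pf_gt, show t+1+j-1 = t+j by omega, Qf_ge]
    omega

lemma fact_h5a : ∀ a, a ≤ t → Qf t d k (a+t) = Pf t d n a + k := by
  intro a ha
  rw [show a + t = t + a by omega, Qf_ge, Pf_le d n ha]

lemma fact_h5b : ∀ a, t+1 ≤ a → a ≤ 2*t → Pf t d n a = Qf t d k (a-t-1) + n := by
  intro a h1 h2
  obtain ⟨j, rfl⟩ : ∃ j, a = t + 1 + j := ⟨a - (t+1), by omega⟩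
  rw [Pf_gt, show t+1+j-t-1 = j by omega, Qf_lt d k (by omega)]

end Facts

/-- for `k < n ≤ 2k` and `t ≥ 1`, there is an alternating cycle
`{(x_α,y_α) : α ∈ ZMod (2t+1)}` of incomparable pairs of `S_n^k` satisfying the
Matching Conditions (the cyclic order `x_1 ⪯ y_1 ≺ x_2 ⪯ y_2 ≺ ⋯` holds around the
circle, and each `(x_α, y_{α+t})` has cyclic size `k+1`) iff `t(n−k) ≤ k`. -/
theorem matching_cycle_iff (n k t : ℕ) (hn : 3 ≤ n) (hkn : k < n) (hn2k : n ≤ 2 * k)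
    (ht : 1 ≤ t) :
    (∃ x y : ZMod (2 * t + 1) → ZMod (n + k),
      (∀ α : ZMod (2 * t + 1), Incomp n k (x α) (y α)) ∧
      (∀ α : ZMod (2 * t + 1), CompLt n k (x α) (y (α - 1))) ∧
      (∀ α : ZMod (2 * t + 1), (x α - x 0).val ≤ (y α - x 0).val) ∧
      (∀ α : ZMod (2 * t + 1), α.val < 2 * t →
        (y α - x 0).val < (x (α + 1) - x 0).val) ∧
      (∀ α : ZMod (2 * t + 1),
        (y (α + (t : ZMod (2 * t + 1))) - x α).val = k)) ↔ t * (n - k) ≤ k := by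
  haveI hm : NeZero (n + k) := ⟨by omega⟩
  haveI hN : NeZero (2*t+1) := ⟨by omega⟩
  have hk2 : 2 ≤ k := by omega
  set d : ℕ := n - k with hdd
  have hd : k + d = n := by omega
  have hd1 : 1 ≤ d := by omega
  have hk1 : 1 ≤ k := by omega
  have hαval : ∀ α : ZMod (2*t+1), α.val ≤ 2*t := by
    intro α; have := ZMod.val_lt α; omega
  have hvN : ∀ a : ℕ, a < 2*t+1 → ((a : ZMod (2*t+1))).val = a :=
    fun a ha => ZMod.val_natCast_of_lt ha
  constructor
  · -- existence → t*d ≤ k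
    rintro ⟨x, y, h1, h2, h3, h4, h5⟩
    have hpq : ∀ a : ℕ, (x (a : ZMod (2*t+1)) - x 0).val ≤ (y (a : ZMod (2*t+1)) - x 0).val :=
      fun a => h3 _
    have hqp : ∀ a : ℕ, a < 2*t →
        (y (a : ZMod (2*t+1)) - x 0).val < (x ((a+1 : ℕ) : ZMod (2*t+1)) - x 0).val := by
      intro a ha
      have hcast : ((a : ZMod (2*t+1)) + 1) = ((a+1 : ℕ) : ZMod (2*t+1)) := by push_cast; ring
      have := h4 (a : ZMod (2*t+1)) (by rw [hvN a (by omega)]; exact ha)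
      rwa [hcast] at this
    have hp_mono : ∀ b, ∀ a, a ≤ b → b ≤ 2*t →
        (x (a : ZMod (2*t+1)) - x 0).val ≤ (x (b : ZMod (2*t+1)) - x 0).val := by
      intro b
      induction b with
      | zero => intro a ha _; rw [Nat.le_zero.mp ha]
      | succ b ih =>
        intro a ha hb
        rcases Nat.eq_or_lt_of_le ha with h | h
        · subst h; exact le_refl _
        · calc (x (a : ZMod (2*t+1)) - x 0).val
              ≤ (x (b : ZMod (2*t+1)) - x 0).val := ih a (by omega) (by omega)
            _ ≤ (y (b : ZMod (2*t+1)) - x 0).val := hpq b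
            _ ≤ (x ((b+1 : ℕ) : ZMod (2*t+1)) - x 0).val := (hqp b (by omega)).le
    have hA : ∀ a : ℕ, a ≤ t →
        (y ((a+t : ℕ) : ZMod (2*t+1)) - x 0).val
          = (x ((a : ℕ) : ZMod (2*t+1)) - x 0).val + k := by
      intro a ha
      have e1 : ((a : ZMod (2*t+1)) + (t : ZMod (2*t+1))) = ((a + t : ℕ) : ZMod (2*t+1)) := by
        push_cast; ring
      have h := h5 (a : ZMod (2*t+1))
      rw [e1, ← sub_sub_sub_cancel_right (y ((a+t:ℕ) : ZMod (2*t+1))) (x (a : ZMod (2*t+1))) (x 0)] at h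
      have hle : (x ((a : ℕ) : ZMod (2*t+1)) - x 0).val
          ≤ (y ((a+t : ℕ) : ZMod (2*t+1)) - x 0).val :=
        le_trans (hp_mono (a+t) a (by omega) (by omega)) (hpq (a+t))
      rw [sub_val_of_le hle] at h
      omega
    have hB : ∀ a : ℕ, t+1 ≤ a → a ≤ 2*t →
        (x ((a : ℕ) : ZMod (2*t+1)) - x 0).val
          = (y ((a-t-1 : ℕ) : ZMod (2*t+1)) - x 0).val + n := by
      intro a h1a h2a
      have e1 : ((a : ZMod (2*t+1)) + (t : ZMod (2*t+1))) = ((a - t - 1 : ℕ) : ZMod (2*t+1)) := by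
        calc ((a : ZMod (2*t+1)) + (t : ZMod (2*t+1))) = ((a + t : ℕ) : ZMod (2*t+1)) := by
              push_cast; ring
          _ = (((a - t - 1) + (2*t+1) : ℕ) : ZMod (2*t+1)) := by
              rw [show (a + t : ℕ) = (a - t - 1) + (2*t+1) by omega]
          _ = ((a - t - 1 : ℕ) : ZMod (2*t+1)) := by
              rw [Nat.cast_add, ZMod.natCast_self, add_zero]
      have h := h5 (a : ZMod (2*t+1))
      rw [e1, ← sub_sub_sub_cancel_right (y ((a-t-1:ℕ) : ZMod (2*t+1))) (x (a : ZMod (2*t+1))) (x 0)] at h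
      have hlt : (y ((a-t-1 : ℕ) : ZMod (2*t+1)) - x 0).val
          < (x ((a : ℕ) : ZMod (2*t+1)) - x 0).val := by
        calc (y ((a-t-1 : ℕ) : ZMod (2*t+1)) - x 0).val
            < (x ((a-t-1+1 : ℕ) : ZMod (2*t+1)) - x 0).val := hqp (a-t-1) (by omega)
          _ ≤ (x ((a : ℕ) : ZMod (2*t+1)) - x 0).val := by
              rw [show a-t-1+1 = a-t by omega]
              exact hp_mono a (a-t) (by omega) (by omega)
      rw [sub_val_of_lt hlt] at h
      have := ZMod.val_lt (x ((a : ℕ) : ZMod (2*t+1)) - x 0)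
      omega
    have hp0 : (x ((0 : ℕ) : ZMod (2*t+1)) - x 0).val = 0 := by
      rw [Nat.cast_zero, sub_self, ZMod.val_zero]
    have hqt : (y ((t : ℕ) : ZMod (2*t+1)) - x 0).val = k := by
      have := hA 0 (by omega)
      rw [show (0 + t : ℕ) = t by omega] at this
      omega
    have main : ∀ j, j ≤ t → j * d ≤ (x ((j : ℕ) : ZMod (2*t+1)) - x 0).val := by
      intro j
      induction j with
      | zero => intro _; omega
      | succ j ih =>
        intro hj
        have e1 := hB (t+1+j) (by omega) (by omega)
        rw [show (t+1+j-t-1 : ℕ) = j by omega] at e1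
        have e2 := hA (j+1) hj
        rw [show (j+1+t : ℕ) = t+1+j by omega] at e2
        have e3 := hpq (t+1+j)
        have e4 := hpq j
        have ih' := ih (by omega)
        have : (j+1) * d = j * d + d := by rw [add_one_mul]
        omega
    have h6 := main t (le_refl t)
    have h7 := hpq t
    omega
  · -- t*d ≤ k → existence
    intro htk
    have htd : t * d ≤ k := htk
    have vP : ∀ a, a ≤ 2*t → ((Pf t d n a : ℕ) : ZMod (n+k)).val = Pf t d n a :=
      fun a ha => ZMod.val_natCast_of_lt (fact_Ple hd hd1 htd hk1 a ha)
    have vQ : ∀ a, a ≤ 2*t → ((Qf t d k a : ℕ) : ZMod (n+k)).val = Qf t d k a :=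
      fun a ha => ZMod.val_natCast_of_lt (fact_Qle hd hd1 htd hk1 a ha)
    have hv1 : (1 : ZMod (2*t+1)).val = 1 := by
      rw [show (1 : ZMod (2*t+1)) = ((1:ℕ) : ZMod (2*t+1)) by push_cast; ring]
      exact hvN 1 (by omega)
    have eP0 : Pf t d n 0 = 0 := by simp [Pf]
    refine ⟨fun α => ((Pf t d n α.val : ℕ) : ZMod (n+k)),
            fun α => ((Qf t d k α.val : ℕ) : ZMod (n+k)), ?_, ?_, ?_, ?_, ?_⟩
    · -- Incomp
      intro α
      have ha := hαval α
      have h := fact_PQ hd hd1 htd hk1 α.val ha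
      show (((Qf t d k α.val : ℕ) : ZMod (n+k)) - ((Pf t d n α.val : ℕ) : ZMod (n+k))).val ≤ k
      rw [sub_val_of_le (by rw [vP _ ha, vQ _ ha]; exact h.1), vP _ ha, vQ _ ha]
      omega
    · -- CompLt
      intro α
      have ha := hαval α
      show k < (((Qf t d k (α-1).val : ℕ) : ZMod (n+k)) - ((Pf t d n α.val : ℕ) : ZMod (n+k))).val
      rcases Nat.eq_zero_or_pos α.val with h0 | hpos
      · have hsub : (α - 1).val = 2*t := by
          rw [sub_val_of_lt (by rw [hv1]; omega), hv1]; omega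
        rw [hsub, h0, eP0, Nat.cast_zero]
        have e : Qf t d k (2*t) = t * d + k := by
          rw [show 2*t = t + t by omega, Qf_ge]
        have : 1 * d ≤ t * d := mul_le_mul_left (by omega) d
        rw [sub_val_of_le (by rw [ZMod.val_zero]; omega), ZMod.val_zero,
          vQ _ (by omega), e]
        omega
      · have hsub : (α - 1).val = α.val - 1 := by
          rw [sub_val_of_le (by rw [hv1]; omega), hv1]
        rw [hsub]
        have hlt := fact_QPsucc hd hd1 htd hk1 (α.val - 1) (by omega)
        rw [show α.val - 1 + 1 = α.val by omega] at hlt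
        have hcomp := fact_comp hd hd1 htd hk1 α.val (by omega) ha
        rw [sub_val_of_lt (by rw [vP _ ha, vQ _ (by omega)]; exact hlt),
          vP _ ha, vQ _ (by omega)]
        omega
    · -- ordering x ≤ y
      intro α
      have ha := hαval α
      show (((Pf t d n α.val : ℕ) : ZMod (n+k)) - ((Pf t d n (0 : ZMod (2*t+1)).val : ℕ) : ZMod (n+k))).val
        ≤ (((Qf t d k α.val : ℕ) : ZMod (n+k)) - ((Pf t d n (0 : ZMod (2*t+1)).val : ℕ) : ZMod (n+k))).val
      rw [ZMod.val_zero, eP0, Nat.cast_zero, sub_zero, sub_zero, vP _ ha, vQ _ ha]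
      exact (fact_PQ hd hd1 htd hk1 α.val ha).1
    · -- ordering y < next x
      intro α hlt2t
      have ha := hαval α
      have hsucc : (α + 1).val = α.val + 1 := by
        rw [ZMod.val_add, hv1, Nat.mod_eq_of_lt (by omega)]
      show (((Qf t d k α.val : ℕ) : ZMod (n+k)) - ((Pf t d n (0 : ZMod (2*t+1)).val : ℕ) : ZMod (n+k))).val
        < (((Pf t d n (α+1).val : ℕ) : ZMod (n+k)) - ((Pf t d n (0 : ZMod (2*t+1)).val : ℕ) : ZMod (n+k))).val
      rw [ZMod.val_zero, eP0, Nat.cast_zero, sub_zero, sub_zero, hsucc,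
        vP _ (by omega), vQ _ (by omega)]
      exact fact_QPsucc hd hd1 htd hk1 α.val hlt2t
    · -- size condition
      intro α
      have ha := hαval α
      have hvt : ((t : ℕ) : ZMod (2*t+1)).val = t := hvN t (by omega)
      have hadd : (α + (t : ZMod (2*t+1))).val = (α.val + t) % (2*t+1) := by
        rw [ZMod.val_add, hvt]
      show (((Qf t d k (α + (t : ZMod (2*t+1))).val : ℕ) : ZMod (n+k))
            - ((Pf t d n α.val : ℕ) : ZMod (n+k))).val = k
      rcases le_or_gt α.val t with h | h
      · have hβ : (α + (t : ZMod (2*t+1))).val = α.val + t := by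
          rw [hadd, Nat.mod_eq_of_lt (by omega)]
        rw [hβ]
        have e := fact_h5a hd hd1 htd hk1 α.val h
        rw [sub_val_of_le (by rw [vP _ ha, vQ _ (by omega)]; omega),
          vP _ ha, vQ _ (by omega)]
        omega
      · have hβ : (α + (t : ZMod (2*t+1))).val = α.val - t - 1 := by
          rw [hadd, show α.val + t = (α.val - t - 1) + (2*t+1) by omega,
            Nat.add_mod_right, Nat.mod_eq_of_lt (by omega)]
        rw [hβ]
        have e := fact_h5b hd hd1 htd hk1 α.val (by omega) ha
        rw [sub_val_of_lt (by rw [vP _ ha, vQ _ (by omega)]; omega),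
          vP _ ha, vQ _ (by omega)]
        omega

end CrownPaper
end

section
/- Let n ≥ 3, k ≥ 0, and let S be an independent set in G_n^k. If S contains pairs (a_1, b_i) and (a_{j+1}, b_{k+2}) with 1 ≤ i < j ≤ k+1 (so a_1 ⪯ b_i ≺ a_{j+1} ⪯ b_{k+2}), then |B(a_1,S)| + |A(b_{k+2},S)| ≤ k + 3 − n, where B(a_1,S) = {b : (a_1,b) ∈ S} and A(b_{k+2},S) = {a : (a,b_{k+2}) ∈ S}. -/
namespace CrownPaper

lemma count_lemma (n k : ℕ) (hn : 3 ≤ n) (T U : Finset ℕ)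
    (hT : ∀ t ∈ T, t ≤ k) (hU : ∀ s ∈ U, s ≤ k)
    (h : ∀ t ∈ T, ∀ s ∈ U, k + 1 ≤ t + s ∨ t + s + n ≤ k + 1)
    (t₀ : ℕ) (ht₀ : t₀ ∈ T) (s₀ : ℕ) (hs₀ : s₀ ∈ U) (h0 : t₀ + s₀ + n ≤ k + 1) :
    T.card + U.card + n ≤ k + 3 := by
  classical
  set U' : Finset ℕ := U.image (k - ·) with hU'def
  have hUcard : U'.card = U.card :=
    Finset.card_image_of_injOn (fun s hs s' hs' e => by
      have := hU s hs; have := hU s' hs'; omega)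
  have hU'le : ∀ u ∈ U', u ≤ k := by
    intro u hu; obtain ⟨s, hs, rfl⟩ := Finset.mem_image.1 hu; omega
  have h' : ∀ t ∈ T, ∀ u ∈ U', u < t ∨ t + n ≤ u + 1 := by
    intro t ht u hu
    obtain ⟨s, hs, rfl⟩ := Finset.mem_image.1 hu
    have hsk := hU s hs
    rcases h t ht s hs with h1 | h1
    · left; omega
    · right; omega
  have hu₀ : (k - s₀) ∈ U' := Finset.mem_image_of_mem _ hs₀
  have h0' : t₀ + n ≤ (k - s₀) + 1 := by have := hU s₀ hs₀; omega
  set u₀ := k - s₀ with hu₀def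
  have hT'ne : (T.filter (· < u₀)).Nonempty := ⟨t₀, Finset.mem_filter.2 ⟨ht₀, by omega⟩⟩
  set t' := (T.filter (· < u₀)).max' hT'ne with ht'def
  have ht'mem : t' ∈ T.filter (· < u₀) := Finset.max'_mem _ _
  have ht'T : t' ∈ T := (Finset.mem_filter.1 ht'mem).1
  have ht'lt : t' < u₀ := (Finset.mem_filter.1 ht'mem).2
  have ht'max : ∀ t ∈ T, t < u₀ → t ≤ t' := by
    intro t ht htl
    apply Finset.le_max'
    exact Finset.mem_filter.2 ⟨ht, htl⟩
  have hkey : t' + n ≤ u₀ + 1 := by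
    rcases h' t' ht'T u₀ hu₀ with h1 | h1
    · omega
    · exact h1
  set G : Finset ℕ := Finset.Ico (t' + 1) (t' + (n - 1)) with hGdef
  have hGcard : G.card = n - 2 := by rw [hGdef, Nat.card_Ico]; omega
  have hGT : Disjoint G T := by
    rw [Finset.disjoint_left]
    intro g hg hgT
    rw [hGdef, Finset.mem_Ico] at hg
    have := ht'max g hgT (by omega)
    omega
  have hGU : Disjoint G U' := by
    rw [Finset.disjoint_left]
    intro g hg hgU
    rw [hGdef, Finset.mem_Ico] at hg
    rcases h' t' ht'T g hgU with h1 | h1 <;> omega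
  have hTU : Disjoint T U' := by
    rw [Finset.disjoint_left]
    intro t ht htU
    rcases h' t ht t htU with h1 | h1 <;> omega
  have hsub : T ∪ U' ∪ G ⊆ Finset.range (k + 1) := by
    intro x hx
    rw [Finset.mem_range]
    rcases Finset.mem_union.1 hx with hx | hx
    · rcases Finset.mem_union.1 hx with hx | hx
      · have := hT x hx; omega
      · have := hU'le x hx; omega
    · rw [hGdef, Finset.mem_Ico] at hx; omega
  have hcard : (T ∪ U' ∪ G).card = T.card + U'.card + G.card := by
    rw [Finset.card_union_of_disjoint (by
      rw [Finset.disjoint_union_left]; exact ⟨hGT.symm, hGU.symm⟩),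
      Finset.card_union_of_disjoint hTU]
  have := Finset.card_le_card hsub
  rw [hcard] at this
  rw [Finset.card_range] at this
  omega

lemma sub_val (N : ℕ) [NeZero N] (x y : ℕ) (hx : x ≤ N) :
    ((y : ZMod N) - (x : ℕ)).val = (y + (N - x)) % N := by
  have h1 : ((N - x : ℕ) : ZMod N) = -(x : ZMod N) := by
    rw [Nat.cast_sub hx, ZMod.natCast_self]; ring
  have h2 : ((y : ZMod N) - x) = ((y + (N - x) : ℕ) : ZMod N) := by
    rw [Nat.cast_add, h1]; ring
  rw [h2, ZMod.val_natCast]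

lemma cast_val_eq (N : ℕ) [NeZero N] (b : ZMod N) : ((b.val : ℕ) : ZMod N) = b := by
  simp [ZMod.natCast_val, ZMod.cast_id]

/-- if an independent set `S` in `G_n^k` contains `(a_1, b_i)` and
`(a_{j+1}, b_{k+2})` with `1 ≤ i < j ≤ k+1`, then
`|B(a_1,S)| + |A(b_{k+2},S)| ≤ k + 3 − n`. -/
theorem indep_fan_bound (n k : ℕ) (hn : 3 ≤ n) (S : Set (Pair n k))
    (hS : Indep n k S) (i j : ℕ) (h1 : 1 ≤ i) (hij : i < j) (hj : j ≤ k + 1)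
    (hmem1 : ((1 : ZMod (n + k)), ((i : ℕ) : ZMod (n + k))) ∈ S)
    (hmem2 : (((j + 1 : ℕ) : ZMod (n + k)), ((k + 2 : ℕ) : ZMod (n + k))) ∈ S) :
    {b : ZMod (n + k) | ((1 : ZMod (n + k)), b) ∈ S}.ncard +
      {a : ZMod (n + k) | (a, ((k + 2 : ℕ) : ZMod (n + k))) ∈ S}.ncard + n ≤ k + 3 := by
  haveI : NeZero (n + k) := ⟨by omega⟩
  classical
  set f : ℕ → ZMod (n + k) := fun t => ((1 + t : ℕ) : ZMod (n + k)) with hf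
  set g : ℕ → ZMod (n + k) := fun s => ((k + 2 : ℕ) : ZMod (n + k)) - (s : ℕ) with hg
  set T : Finset ℕ := (Finset.range (k + 1)).filter
      (fun t => ((1 : ZMod (n + k)), f t) ∈ S) with hTdef
  set U : Finset ℕ := (Finset.range (k + 1)).filter
      (fun s => (g s, ((k + 2 : ℕ) : ZMod (n + k))) ∈ S) with hUdef
  have hval1 : ∀ t : ℕ, t ≤ k → (f t).val = 1 + t := by
    intro t ht
    show ((1 + t : ℕ) : ZMod (n + k)).val = 1 + t
    rw [ZMod.val_natCast]
    exact Nat.mod_eq_of_lt (by omega)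
  have hvalnat : ∀ s : ℕ, s ≤ k → ((s : ℕ) : ZMod (n + k)).val = s := by
    intro s hs
    rw [ZMod.val_natCast]
    exact Nat.mod_eq_of_lt (by omega)
  -- B = image of T
  have hB : {b : ZMod (n + k) | ((1 : ZMod (n + k)), b) ∈ S} = ↑(T.image f) := by
    ext b
    simp only [Set.mem_setOf_eq, Finset.coe_image, Set.mem_image, Finset.mem_coe,
      hTdef, Finset.mem_filter, Finset.mem_range]
    constructor
    · intro hb
      have hinc : (b - 1).val ≤ k := hS.1 _ hb
      have hfb : f (b - 1).val = b := by
        show ((1 + (b - 1).val : ℕ) : ZMod (n + k)) = b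
        rw [Nat.cast_add, Nat.cast_one, cast_val_eq]
        ring
      exact ⟨(b - 1).val, ⟨by omega, by rw [hfb]; exact hb⟩, hfb⟩
    · rintro ⟨t, ⟨-, ht⟩, rfl⟩
      exact ht
  have hA : {a : ZMod (n + k) | (a, ((k + 2 : ℕ) : ZMod (n + k))) ∈ S} = ↑(U.image g) := by
    ext a
    simp only [Set.mem_setOf_eq, Finset.coe_image, Set.mem_image, Finset.mem_coe,
      hUdef, Finset.mem_filter, Finset.mem_range]
    constructor
    · intro ha
      have hinc : (((k + 2 : ℕ) : ZMod (n + k)) - a).val ≤ k := hS.1 _ ha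
      have hga : g (((k + 2 : ℕ) : ZMod (n + k)) - a).val = a := by
        show ((k + 2 : ℕ) : ZMod (n + k)) -
            (((((k + 2 : ℕ) : ZMod (n + k)) - a).val : ℕ) : ZMod (n + k)) = a
        rw [cast_val_eq]
        ring
      exact ⟨(((k + 2 : ℕ) : ZMod (n + k)) - a).val, ⟨by omega, by rw [hga]; exact ha⟩, hga⟩
    · rintro ⟨s, ⟨-, hs⟩, rfl⟩
      exact hs
  have hBcard : {b : ZMod (n + k) | ((1 : ZMod (n + k)), b) ∈ S}.ncard = T.card := by
    rw [hB, Set.ncard_coe_finset]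
    apply Finset.card_image_of_injOn
    intro t ht t' ht' he
    rw [Finset.mem_coe, hTdef, Finset.mem_filter, Finset.mem_range] at ht ht'
    have := congrArg ZMod.val he
    rw [hval1 t (by omega), hval1 t' (by omega)] at this
    omega
  have hAcard : {a : ZMod (n + k) | (a, ((k + 2 : ℕ) : ZMod (n + k))) ∈ S}.ncard = U.card := by
    rw [hA, Set.ncard_coe_finset]
    apply Finset.card_image_of_injOn
    intro s hs s' hs' he
    rw [Finset.mem_coe, hUdef, Finset.mem_filter, Finset.mem_range] at hs hs'
    have he2 : ((s : ℕ) : ZMod (n + k)) = ((s' : ℕ) : ZMod (n + k)) := by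
      have : ((k + 2 : ℕ) : ZMod (n + k)) - (s : ℕ) = ((k + 2 : ℕ) : ZMod (n + k)) - (s' : ℕ) := he
      exact sub_right_inj.mp this
    have := congrArg ZMod.val he2
    rw [hvalnat s (by omega), hvalnat s' (by omega)] at this
    omega
  -- membership of witnesses
  have ht₀ : i - 1 ∈ T := by
    rw [hTdef, Finset.mem_filter, Finset.mem_range]
    refine ⟨by omega, ?_⟩
    have hfi : f (i - 1) = ((i : ℕ) : ZMod (n + k)) := by
      show ((1 + (i - 1) : ℕ) : ZMod (n + k)) = ((i : ℕ) : ZMod (n + k))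
      congr 1
      omega
    rw [hfi]
    exact hmem1
  have hs₀ : k + 1 - j ∈ U := by
    rw [hUdef, Finset.mem_filter, Finset.mem_range]
    refine ⟨by omega, ?_⟩
    have hgj : g (k + 1 - j) = ((j + 1 : ℕ) : ZMod (n + k)) := by
      show ((k + 2 : ℕ) : ZMod (n + k)) - ((k + 1 - j : ℕ) : ZMod (n + k)) = _
      rw [← Nat.cast_sub (by omega)]
      congr 1
      omega
    rw [hgj]
    exact hmem2
  -- the key independence condition
  have hpair : ∀ t ∈ T, ∀ s ∈ U, k + 1 ≤ t + s ∨ t + s + n ≤ k + 1 := by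
    intro t ht s hs
    rw [hTdef, Finset.mem_filter, Finset.mem_range] at ht
    rw [hUdef, Finset.mem_filter, Finset.mem_range] at hs
    by_cases hc : k + 1 ≤ t + s
    · left; exact hc
    right
    have hna := hS.2 _ ht.2 _ hs.2
    have c1 : CompLt n k ((1 : ZMod (n + k))) (((k + 2 : ℕ) : ZMod (n + k))) := by
      show k < (((k + 2 : ℕ) : ZMod (n + k)) - (1 : ZMod (n + k))).val
      have h1' : (1 : ZMod (n + k)) = ((1 : ℕ) : ZMod (n + k)) := (Nat.cast_one).symm
      rw [h1', sub_val (n + k) 1 (k + 2) (by omega)]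
      have he : k + 2 + (n + k - 1) = (k + 1) + (n + k) := by omega
      rw [he, Nat.add_mod_right, Nat.mod_eq_of_lt (by omega)]
      omega
    have c2 : ¬ CompLt n k (g s) (f t) := fun c => hna ⟨c1, c⟩
    unfold CompLt at c2
    rw [not_lt] at c2
    have he : f t - g s = ((1 + t + s : ℕ) : ZMod (n + k)) - ((k + 2 : ℕ) : ZMod (n + k)) := by
      show ((1 + t : ℕ) : ZMod (n + k)) - (((k + 2 : ℕ) : ZMod (n + k)) - ((s : ℕ) : ZMod (n + k))) = _
      push_cast
      ring
    rw [he, sub_val (n + k) (k + 2) (1 + t + s) (by omega)] at c2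
    have he2 : 1 + t + s + (n + k - (k + 2)) = t + s + n - 1 := by omega
    rw [he2, Nat.mod_eq_of_lt (by omega)] at c2
    omega
  have h0 : (i - 1) + (k + 1 - j) + n ≤ k + 1 := by
    rcases hpair _ ht₀ _ hs₀ with hx | hx <;> omega
  rw [hBcard, hAcard]
  have hTle : ∀ t ∈ T, t ≤ k := by
    intro t ht
    rw [hTdef, Finset.mem_filter, Finset.mem_range] at ht
    omega
  have hUle : ∀ s ∈ U, s ≤ k := by
    intro s hs
    rw [hUdef, Finset.mem_filter, Finset.mem_range] at hs
    omega
  exact count_lemma n k hn T U hTle hUle hpair _ ht₀ _ hs₀ h0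

end CrownPaper
end
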